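/- arXiv:1408.3522 — 7 statements merged into one kernel-verified Lean document; each statement's English description precedes it below -/
import Mathlib

section
/- Let D ≥ 2 be an integer and C ≥ 0 a real number. Let (N̄_j)_{j≥1} and (P̄_j)_{j≥1} be sequences of nonnegative reals satisfying N̄_j = Σ_{i | j} P̄_i for every j ≥ 1 and N̄_j ≤ C·D·(D−1)^{j−1} for every j ≥ 1. Then: (a) for every complex u with |u| < (D−1)^{−1} the series Σ_{j≥1} (N̄_j/j) u^j converges absolutely, and Z(u) := exp(Σ_{j≥1} (N̄_j/j) u^j) is holomorphic on the open disc {u ∈ ℂ : |u| < (D−1)^{−1}}; (b) for every such u the family (exp(−(P̄_j/j)·Log(1−u^j)))_{j≥1} is multipliable (the corresponding series Σ_{j≥1} (P̄_j/j)·Log(1−u^j) converges absolutely) and Z(u) = Π_{j≥1} exp(−(P̄_j/j)·Log(1−u^j)), where Log denotes the principal branch of the complex logarithm. -/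
/-!
Expanding `-Log (1 - u ^ i) = ∑ₖ u ^ (i k) / k`, the logarithm of the Euler product becomes the
double series `∑_{i,k} P̄ᵢ u ^ (i k) / (i k)`. Grouping its terms by `n = i k` gives
`∑ₙ (∑_{i ∣ n} P̄ᵢ) uⁿ / n = ∑ₙ N̄ₙ uⁿ / n`. Since `P̄ ≥ 0`, the same regrouping of the absolute
double series yields the `N̄`-series at `‖u‖`, which converges by the bound
`N̄ₙ ≤ C D (D - 1) ^ (n - 1)`; so the double series converges absolutely and both groupings are
legitimate. The same bound makes the `N̄`-series converge locally uniformly on the disc, hence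
holomorphic there.
-/

section PowerSeries

variable {a : ℕ → ℝ} {M ρ : ℝ}

lemma norm_coeff_div_mul_pow_le (ha : ∀ j, |a (j + 1)| ≤ M * ρ ^ j) {u : ℂ} {r : ℝ}
    (hu : ‖u‖ ≤ r) (j : ℕ) :
    ‖(a (j + 1) : ℂ) / ((j : ℂ) + 1) * u ^ (j + 1)‖ ≤ M * r * (ρ * r) ^ j := by
  have hr : 0 ≤ r := (norm_nonneg u).trans hu
  have hnorm : ‖(a (j + 1) : ℂ) / ((j : ℂ) + 1) * u ^ (j + 1)‖
      = |a (j + 1)| / (j + 1) * ‖u‖ ^ (j + 1) := by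
    rw [norm_mul, norm_div, norm_pow, Complex.norm_real, Real.norm_eq_abs]
    norm_cast
  calc ‖(a (j + 1) : ℂ) / ((j : ℂ) + 1) * u ^ (j + 1)‖
      ≤ |a (j + 1)| * r ^ (j + 1) := by
        rw [hnorm]
        gcongr
        exact div_le_self (abs_nonneg _) (by linarith [(j.cast_nonneg : (0 : ℝ) ≤ j)])
    _ ≤ M * ρ ^ j * r ^ (j + 1) := by gcongr; exact ha j
    _ = M * r * (ρ * r) ^ j := by ring

lemma mul_lt_one_of_lt_inv {r : ℝ} (hr : 0 ≤ r) (hrρ : r < ρ⁻¹) : ρ * r < 1 := by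
  have hρ : 0 < ρ := inv_pos.mp (hr.trans_lt hrρ)
  simpa [hρ.ne'] using mul_lt_mul_of_pos_left hrρ hρ

lemma summable_norm_coeff_div_mul_pow (ha : ∀ j, |a (j + 1)| ≤ M * ρ ^ j) {u : ℂ}
    (hu : ‖u‖ < ρ⁻¹) :
    Summable fun j : ℕ => ‖(a (j + 1) : ℂ) / ((j : ℂ) + 1) * u ^ (j + 1)‖ := by
  have hρ : 0 < ρ := inv_pos.mp ((norm_nonneg u).trans_lt hu)
  refine Summable.of_nonneg_of_le (fun _ => norm_nonneg _) (norm_coeff_div_mul_pow_le ha le_rfl)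
    ((summable_geometric_of_lt_one (by positivity) ?_).mul_left _)
  exact mul_lt_one_of_lt_inv (norm_nonneg u) hu

lemma differentiableOn_tsum_coeff_div_mul_pow (ha : ∀ j, |a (j + 1)| ≤ M * ρ ^ j) :
    DifferentiableOn ℂ (fun u : ℂ => ∑' j : ℕ, (a (j + 1) : ℂ) / ((j : ℂ) + 1) * u ^ (j + 1))
      (Metric.ball 0 ρ⁻¹) := by
  intro u hu
  obtain ⟨r, hur, hrρ⟩ := exists_between (mem_ball_zero_iff.mp hu)
  have hr : 0 ≤ r := (norm_nonneg u).trans hur.le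
  have hρ : 0 < ρ := inv_pos.mp (hr.trans_lt hrρ)
  have hdiff : DifferentiableOn ℂ
      (fun w : ℂ => ∑' j : ℕ, (a (j + 1) : ℂ) / ((j : ℂ) + 1) * w ^ (j + 1))
      (Metric.ball 0 r) :=
    Complex.differentiableOn_tsum_of_summable_norm
      ((summable_geometric_of_lt_one (by positivity) (mul_lt_one_of_lt_inv hr hrρ)).mul_left _)
      (fun j => ((differentiable_pow (j + 1)).const_mul _).differentiableOn) Metric.isOpen_ball
      (fun j w hw => norm_coeff_div_mul_pow_le ha (mem_ball_zero_iff.mp hw).le j)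
  exact (hdiff.differentiableAt (Metric.isOpen_ball.mem_nhds (mem_ball_zero_iff.mpr hur)))
    |>.differentiableWithinAt

end PowerSeries

/-- The terms with `p.1 * p.2 = 0` vanish, by the convention `x / 0 = 0`. -/
def eulerDoubleTerm {𝕜 : Type*} [Field 𝕜] (a : ℕ → 𝕜) (u : 𝕜) (p : ℕ × ℕ) : 𝕜 :=
  a p.1 / (p.1 * p.2 : ℕ) * u ^ (p.1 * p.2)

lemma norm_eulerDoubleTerm (a : ℕ → ℂ) (u : ℂ) (p : ℕ × ℕ) :
    ‖eulerDoubleTerm a u p‖ = eulerDoubleTerm (‖a ·‖) ‖u‖ p := by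
  simp only [eulerDoubleTerm, norm_mul, norm_div, norm_pow, Complex.norm_natCast]

lemma hasSum_eulerDoubleTerm_mulFiber {𝕜 : Type*} [Field 𝕜] [TopologicalSpace 𝕜]
    (a : ℕ → 𝕜) (u : 𝕜) (n : ℕ) :
    HasSum (fun p : {p : ℕ × ℕ // p.1 * p.2 = n} => eulerDoubleTerm a u p)
      ((∑ i ∈ n.divisors, a i) / n * u ^ n) := by
  rcases eq_or_ne n 0 with rfl | hn
  · have hzero (p : {p : ℕ × ℕ // p.1 * p.2 = 0}) : eulerDoubleTerm a u p = 0 := by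
      simp [eulerDoubleTerm, p.2]
    simp [funext hzero]
  let e : {p : ℕ × ℕ // p.1 * p.2 = n} ≃ (n.divisorsAntidiagonal : Set (ℕ × ℕ)) :=
    Equiv.subtypeEquivRight fun p => by rw [Finset.mem_coe, Nat.mem_divisorsAntidiagonal]; tauto
  have hval : ∑ p ∈ n.divisorsAntidiagonal, eulerDoubleTerm a u p
      = (∑ i ∈ n.divisors, a i) / n * u ^ n := by
    rw [← Nat.sum_divisorsAntidiagonal (fun i _ => a i), Finset.sum_div, Finset.sum_mul]
    refine Finset.sum_congr rfl fun p hp => ?_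
    rw [eulerDoubleTerm, (Nat.mem_divisorsAntidiagonal.mp hp).1]
  have hfin := e.hasSum_iff.mpr (n.divisorsAntidiagonal.hasSum (eulerDoubleTerm a u))
  rwa [hval] at hfin

lemma summable_eulerDoubleTerm_of_nonneg {a : ℕ → ℝ} (ha : ∀ i, 0 ≤ a i) {x : ℝ} (hx : 0 ≤ x)
    (h : Summable fun n : ℕ => (∑ i ∈ n.divisors, a i) / n * x ^ n) :
    Summable (eulerDoubleTerm a x) := by
  have hnonneg (p : ℕ × ℕ) : 0 ≤ eulerDoubleTerm a x p := by
    have := ha p.1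
    unfold eulerDoubleTerm
    positivity
  rw [← (Equiv.sigmaFiberEquiv fun p : ℕ × ℕ => p.1 * p.2).summable_iff]
  refine (summable_sigma_of_nonneg fun _ => hnonneg _).mpr
    ⟨fun n => (hasSum_eulerDoubleTerm_mulFiber a x n).summable, ?_⟩
  simpa only [Function.comp_apply, Equiv.sigmaFiberEquiv_apply,
    fun n => (hasSum_eulerDoubleTerm_mulFiber a x n).tsum_eq] using h

lemma hasSum_eulerDoubleTerm_fst (a : ℕ → ℂ) {u : ℂ} (hu : ‖u‖ < 1) (i : ℕ) :
    HasSum (fun k => eulerDoubleTerm a u (i, k)) (-(a i / i) * Complex.log (1 - u ^ i)) := by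
  rcases eq_or_ne i 0 with rfl | hi
  · simp [eulerDoubleTerm]
  have hui : ‖u ^ i‖ < 1 := by rw [norm_pow]; exact pow_lt_one₀ (norm_nonneg u) hu hi
  have hterm (k : ℕ) : eulerDoubleTerm a u (i, k) = a i / i * ((u ^ i) ^ k / k) := by
    simp only [eulerDoubleTerm, ← pow_mul]
    push_cast
    ring
  rw [funext hterm, neg_mul, ← mul_neg]
  exact (Complex.hasSum_taylorSeries_neg_log hui).mul_left (a i / i)

lemma summable_norm_eulerDoubleTerm {a : ℕ → ℂ} {u : ℂ}
    (habs : Summable fun n : ℕ => (∑ i ∈ n.divisors, ‖a i‖) / n * ‖u‖ ^ n) :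
    Summable fun p => ‖eulerDoubleTerm a u p‖ := by
  simpa only [norm_eulerDoubleTerm] using
    summable_eulerDoubleTerm_of_nonneg (fun i => norm_nonneg (a i)) (norm_nonneg u) habs

theorem HasSum.neg_mul_log_one_sub_pow {a : ℕ → ℂ} {u S : ℂ}
    (h : HasSum (fun n : ℕ => (∑ i ∈ n.divisors, a i) / n * u ^ n) S) (hu : ‖u‖ < 1)
    (habs : Summable fun n : ℕ => (∑ i ∈ n.divisors, ‖a i‖) / n * ‖u‖ ^ n) :
    HasSum (fun i : ℕ => -(a i / i) * Complex.log (1 - u ^ i)) S := by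
  have hdouble := (summable_norm_eulerDoubleTerm habs).of_norm.hasSum
  have hS : S = ∑' p, eulerDoubleTerm a u p :=
    h.unique (((Equiv.sigmaFiberEquiv fun p : ℕ × ℕ => p.1 * p.2).hasSum_iff.mpr hdouble).sigma
      (hasSum_eulerDoubleTerm_mulFiber a u))
  exact hS ▸ hdouble.prod_fiberwise (hasSum_eulerDoubleTerm_fst a hu)

lemma summable_norm_div_mul_log_one_sub_pow {a : ℕ → ℂ} {u : ℂ} (hu : ‖u‖ < 1)
    (habs : Summable fun n : ℕ => (∑ i ∈ n.divisors, ‖a i‖) / n * ‖u‖ ^ n) :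
    Summable fun i : ℕ => ‖a i / i * Complex.log (1 - u ^ i)‖ := by
  have hF := summable_norm_eulerDoubleTerm habs
  refine Summable.of_nonneg_of_le (fun _ => norm_nonneg _) (fun i => ?_) hF.prod
  rw [← norm_neg, ← neg_mul, ← (hasSum_eulerDoubleTerm_fst a hu i).tsum_eq]
  exact norm_tsum_le_tsum_norm (hF.prod_factor i)

lemma norm_divisorSum_div_mul_pow {a : ℕ → ℝ} (ha : ∀ i, 1 ≤ i → 0 ≤ a i) (u : ℂ) (n : ℕ) :
    ‖(∑ i ∈ n.divisors, (a i : ℂ)) / n * u ^ n‖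
      = (∑ i ∈ n.divisors, ‖(a i : ℂ)‖) / n * ‖u‖ ^ n := by
  have hnorm : ∑ i ∈ n.divisors, ‖(a i : ℂ)‖ = ∑ i ∈ n.divisors, a i :=
    Finset.sum_congr rfl fun i hi => by
      rw [Complex.norm_real, Real.norm_of_nonneg (ha i (Nat.pos_of_mem_divisors hi))]
  rw [hnorm, norm_mul, norm_div, norm_pow, Complex.norm_natCast, ← Complex.ofReal_sum,
    Complex.norm_real, Real.norm_of_nonneg (Finset.sum_nonneg fun i hi =>
      ha i (Nat.pos_of_mem_divisors hi))]

lemma hasSum_succ_iff_of_eq_zero {G : Type*} [AddCommGroup G] [TopologicalSpace G]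
    [IsTopologicalAddGroup G] {f : ℕ → G} (h0 : f 0 = 0) {S : G} :
    HasSum (fun n => f (n + 1)) S ↔ HasSum f S := by
  simp [hasSum_nat_add_iff, h0]

theorem euler_product_scalar_general (D : ℕ) (hD : 2 ≤ D) (C : ℝ)
    (N P : ℕ → ℝ)
    (hPnonneg : ∀ j, 1 ≤ j → 0 ≤ P j)
    (hNP : ∀ j, 1 ≤ j → N j = ∑ i ∈ j.divisors, P i)
    (hbound : ∀ j, 1 ≤ j → N j ≤ C * D * ((D : ℝ) - 1) ^ (j - 1)) :
    (∀ u : ℂ, ‖u‖ < ((D : ℝ) - 1)⁻¹ →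
      Summable (fun j : ℕ => ‖((N (j + 1) : ℂ) / ((j : ℂ) + 1)) * u ^ (j + 1)‖)) ∧
    DifferentiableOn ℂ
      (fun u : ℂ => Complex.exp (∑' j : ℕ, ((N (j + 1) : ℂ) / ((j : ℂ) + 1)) * u ^ (j + 1)))
      (Metric.ball 0 ((D : ℝ) - 1)⁻¹) ∧
    (∀ u : ℂ, ‖u‖ < ((D : ℝ) - 1)⁻¹ →
      Summable (fun j : ℕ =>
        ‖((P (j + 1) : ℂ) / ((j : ℂ) + 1)) * Complex.log (1 - u ^ (j + 1))‖) ∧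
      Multipliable (fun j : ℕ =>
        Complex.exp (-(((P (j + 1) : ℂ)) / ((j : ℂ) + 1)) * Complex.log (1 - u ^ (j + 1)))) ∧
      Complex.exp (∑' j : ℕ, ((N (j + 1) : ℂ) / ((j : ℂ) + 1)) * u ^ (j + 1)) =
        ∏' j : ℕ,
          Complex.exp (-(((P (j + 1) : ℂ)) / ((j : ℂ) + 1)) * Complex.log (1 - u ^ (j + 1)))) := by
  have hN (j : ℕ) : |N (j + 1)| ≤ C * D * ((D : ℝ) - 1) ^ j := by
    have hNj : 0 ≤ N (j + 1) := hNP _ j.succ_pos ▸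
      Finset.sum_nonneg fun i hi => hPnonneg i (Nat.pos_of_mem_divisors hi)
    simpa [abs_of_nonneg hNj] using hbound (j + 1) j.succ_pos
  have hsummable (u : ℂ) (hu : ‖u‖ < ((D : ℝ) - 1)⁻¹) := summable_norm_coeff_div_mul_pow hN hu
  refine ⟨hsummable, (differentiableOn_tsum_coeff_div_mul_pow hN).cexp, fun u hu => ?_⟩
  have hu1 : ‖u‖ < 1 :=
    hu.trans_le (inv_le_one_of_one_le₀ (by linarith [(Nat.ofNat_le_cast.mpr hD : (2 : ℝ) ≤ D)]))
  set g : ℕ → ℂ := fun n => (∑ i ∈ n.divisors, (P i : ℂ)) / n * u ^ n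
  have hg (j : ℕ) : g (j + 1) = (N (j + 1) : ℂ) / ((j : ℂ) + 1) * u ^ (j + 1) := by
    simp [g, hNP _ j.succ_pos]
  have hlogN : HasSum g (∑' j : ℕ, ((N (j + 1) : ℂ) / ((j : ℂ) + 1)) * u ^ (j + 1)) := by
    rw [← hasSum_succ_iff_of_eq_zero (by simp [g]), funext hg]
    exact (hsummable u hu).of_norm.hasSum
  have habs : Summable fun n : ℕ => (∑ i ∈ n.divisors, ‖(P i : ℂ)‖) / n * ‖u‖ ^ n := by
    have hshift : Summable fun j => ‖g (j + 1)‖ := by simpa only [hg] using hsummable u hu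
    simpa only [g, norm_divisorSum_div_mul_pow hPnonneg] using
      (summable_nat_add_iff (f := fun n => ‖g n‖) 1).mp hshift
  have hlogP := (hasSum_succ_iff_of_eq_zero (by simp)).mpr (hlogN.neg_mul_log_one_sub_pow hu1 habs)
  push_cast at hlogP
  refine ⟨?_, hlogP.cexp.multipliable, hlogP.cexp.tprod_eq.symm⟩
  simpa using (summable_nat_add_iff 1).mpr (summable_norm_div_mul_log_one_sub_pow hu1 habs)

/-- Scalar Euler product for the Ihara Zeta function: if the
nonnegative coefficients `N̄_j` satisfy `N̄_j = ∑_{i ∣ j} P̄_i` and the a priori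
bound `N̄_j ≤ C·D·(D−1)^{j−1}`, then the power series `∑_{j≥1} (N̄_j/j) u^j`
converges absolutely on `{|u| < (D−1)⁻¹}`, its exponential `Z` is holomorphic
there, and `Z` has the Euler product
`Z(u) = ∏_{j≥1} (1 − u^j)^{−P̄_j/j}` (powers taken via the principal logarithm). -/
theorem euler_product_scalar (D : ℕ) (hD : 2 ≤ D) (C : ℝ) (hC : 0 ≤ C)
    (N P : ℕ → ℝ)
    (hNnonneg : ∀ j, 1 ≤ j → 0 ≤ N j) (hPnonneg : ∀ j, 1 ≤ j → 0 ≤ P j)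
    (hNP : ∀ j, 1 ≤ j → N j = ∑ i ∈ j.divisors, P i)
    (hbound : ∀ j, 1 ≤ j → N j ≤ C * D * ((D : ℝ) - 1) ^ (j - 1)) :
    (∀ u : ℂ, ‖u‖ < ((D : ℝ) - 1)⁻¹ →
      Summable (fun j : ℕ => ‖((N (j + 1) : ℂ) / ((j : ℂ) + 1)) * u ^ (j + 1)‖)) ∧
    DifferentiableOn ℂ
      (fun u : ℂ => Complex.exp (∑' j : ℕ, ((N (j + 1) : ℂ) / ((j : ℂ) + 1)) * u ^ (j + 1)))
      (Metric.ball 0 ((D : ℝ) - 1)⁻¹) ∧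
    (∀ u : ℂ, ‖u‖ < ((D : ℝ) - 1)⁻¹ →
      Summable (fun j : ℕ =>
        ‖((P (j + 1) : ℂ) / ((j : ℂ) + 1)) * Complex.log (1 - u ^ (j + 1))‖) ∧
      Multipliable (fun j : ℕ =>
        Complex.exp (-(((P (j + 1) : ℂ)) / ((j : ℂ) + 1)) * Complex.log (1 - u ^ (j + 1)))) ∧
      Complex.exp (∑' j : ℕ, ((N (j + 1) : ℂ) / ((j : ℂ) + 1)) * u ^ (j + 1)) =
        ∏' j : ℕ,
          Complex.exp (-(((P (j + 1) : ℂ)) / ((j : ℂ) + 1)) * Complex.log (1 - u ^ (j + 1)))) :=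
  euler_product_scalar_general D hD C N P hPnonneg hNP hbound
end

section
/- Let G=(V,E) be a finite graph, A ∈ ℤ^{V×V} its adjacency matrix (A_{pq} = 1 if p∼q, else 0), Deg the diagonal matrix with entries deg(p), and Q = Deg − I. Define matrices A_0 := I, A_1 := A, A_2 := A² − Q − I, and A_j := A_{j−1}·A − A_{j−2}·Q for j ≥ 3. Then for all j ≥ 0 and all p,q ∈ V, the entry (A_j)_{pq} equals the number of proper (backtrack-free) paths of length j from p to q. -/
/-- The recursively defined sequence `A_0 = 1`, `A_1 = A`, `A_2 = A² − Q − 1`,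
`A_j = A_{j−1}·A − A_{j−2}·Q` (in any ring, e.g. matrices). -/
def Aseq {α : Type*} [Ring α] (A Q : α) : ℕ → α
  | 0 => 1
  | 1 => A
  | 2 => A * A - Q - 1
  | (j + 3) => Aseq A Q (j + 2) * A - Aseq A Q (j + 1) * Q

/-- A path of length `j` from `p` to `q`, encoded as a vertex sequence
`f 0 = p, …, f j = q` (padded constantly after index `j`) whose consecutive
members are adjacent. -/
def IsPathFromTo {V : Type*} (G : SimpleGraph V) (j : ℕ) (p q : V) (f : ℕ → V) : Prop :=
  f 0 = p ∧ f j = q ∧ (∀ i, i < j → G.Adj (f i) (f (i + 1))) ∧ ∀ i, j ≤ i → f i = f j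

/-- A path of length `j` is proper (backtrack-free) if `e_{i+1} ≠ ē_i`,
i.e. `f (i+2) ≠ f i` for all `i` with `i + 2 ≤ j`. -/
def IsProperPath {V : Type*} (j : ℕ) (f : ℕ → V) : Prop :=
  ∀ i, i + 2 ≤ j → f (i + 2) ≠ f i

/-- The number of proper (backtrack-free) paths of length `j` from `p` to `q`. -/
noncomputable def properPathCount {V : Type*} (G : SimpleGraph V) (j : ℕ) (p q : V) : ℕ :=
  Nat.card {f : ℕ → V // IsPathFromTo G j p q f ∧ IsProperPath j f}

section AuxProofs

variable {V : Type*}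

lemma finite_padded [Finite V] (m : ℕ) : Finite {f : ℕ → V // ∀ i, m ≤ i → f i = f m} := by
  apply Finite.of_injective (fun f => (fun i : Fin (m + 1) => f.1 i))
  rintro ⟨f, hf⟩ ⟨g, hg⟩ h
  ext i
  simp only
  rcases le_or_gt i m with hi | hi
  · exact congrFun h ⟨i, by omega⟩
  · have := congrFun h ⟨m, by omega⟩
    simp only at this
    rw [hf i hi.le, hg i hi.le, this]

lemma finite_subpad [Finite V] (m : ℕ) (Pr : (ℕ → V) → Prop)
    (h : ∀ f, Pr f → ∀ i, m ≤ i → f i = f m) : Finite {f : ℕ → V // Pr f} := by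
  have := finite_padded (V := V) m
  apply Finite.of_injective
    (fun f => (⟨f.1, h f.1 f.2⟩ : {f : ℕ → V // ∀ i, m ≤ i → f i = f m}))
  rintro ⟨f, hf⟩ ⟨g, hg⟩ hfg
  simpa [Subtype.ext_iff] using hfg

lemma finite_subpad_prod [Finite V] (m : ℕ) (Pr : V × (ℕ → V) → Prop)
    (h : ∀ x, Pr x → ∀ i, m ≤ i → x.2 i = x.2 m) : Finite {x : V × (ℕ → V) // Pr x} := by
  have := finite_padded (V := V) m
  apply Finite.of_injective
    (fun x => ((x.1.1, ⟨x.1.2, h x.1 x.2⟩) : V × {f : ℕ → V // ∀ i, m ≤ i → f i = f m}))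
  rintro ⟨⟨a, f⟩, hf⟩ ⟨⟨b, g⟩, hg⟩ hfg
  simp only [Prod.mk.injEq, Subtype.mk.injEq] at hfg
  simp [Prod.ext_iff, hfg.1, hfg.2]

lemma finite_paths [Finite V] (G : SimpleGraph V) (j : ℕ) (p q : V) :
    Finite {f : ℕ → V // IsPathFromTo G j p q f ∧ IsProperPath j f} :=
  finite_subpad j _ (fun f hf => hf.1.2.2.2)

lemma natCard_sigma {ι : Type*} [Fintype ι] (f : ι → Type*) [∀ i, Finite (f i)] :
    Nat.card (Σ i, f i) = ∑ i, Nat.card (f i) := by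
  letI : ∀ i, Fintype (f i) := fun i => Fintype.ofFinite _
  simp [Nat.card_eq_fintype_card]

lemma natCard_split {γ : Type*} (Pr Q : γ → Prop)
    [Finite {x : γ // Pr x ∧ Q x}] [Finite {x : γ // Pr x ∧ ¬ Q x}] :
    Nat.card {x : γ // Pr x} = Nat.card {x : γ // Pr x ∧ Q x} + Nat.card {x : γ // Pr x ∧ ¬ Q x} := by
  classical
  have e : {x : γ // Pr x ∧ Q x} ⊕ {x : γ // Pr x ∧ ¬ Q x} ≃ {x : γ // Pr x} :=
    (Equiv.sumCongr (Equiv.subtypeSubtypeEquivSubtypeInter Pr Q).symm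
      (Equiv.subtypeSubtypeEquivSubtypeInter Pr (fun x => ¬ Q x)).symm).trans
      (Equiv.sumCompl fun x : {x : γ // Pr x} => Q x.1)
  rw [← Nat.card_congr e, Nat.card_sum]

lemma count_zero [DecidableEq V] (G : SimpleGraph V) (p q : V) :
    properPathCount G 0 p q = if p = q then 1 else 0 := by
  unfold properPathCount
  split_ifs with h
  · subst h
    rw [Nat.card_eq_one_iff_unique]
    constructor
    · constructor
      rintro ⟨f, ⟨hf0, hfj, -, hfpad⟩, -⟩ ⟨g, ⟨hg0, hgj, -, hgpad⟩, -⟩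
      ext i
      simp only
      rw [hfpad i (Nat.zero_le _), hgpad i (Nat.zero_le _), hfj, hgj]
    · exact ⟨⟨fun _ => p, ⟨rfl, rfl, fun i hi => absurd hi (by omega), fun _ _ => rfl⟩,
        fun i hi => absurd hi (by omega)⟩⟩
  · have : IsEmpty {f : ℕ → V // IsPathFromTo G 0 p q f ∧ IsProperPath 0 f} := by
      refine ⟨fun f => h ?_⟩
      rw [← f.2.1.1, f.2.1.2.1]
    exact Nat.card_of_isEmpty

lemma count_one (G : SimpleGraph V) [DecidableRel G.Adj] (p q : V) :
    properPathCount G 1 p q = if G.Adj p q then 1 else 0 := by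
  unfold properPathCount
  split_ifs with h
  · rw [Nat.card_eq_one_iff_unique]
    constructor
    · constructor
      rintro ⟨f, ⟨hf0, hfj, -, hfpad⟩, -⟩ ⟨g, ⟨hg0, hgj, -, hgpad⟩, -⟩
      ext i
      simp only
      match i with
      | 0 => rw [hf0, hg0]
      | (n+1) => rw [hfpad (n+1) (by omega), hgpad (n+1) (by omega), hfj, hgj]
    · refine ⟨⟨fun i => if i = 0 then p else q, ⟨by simp, by simp, ?_, ?_⟩, ?_⟩⟩
      · intro i hi
        interval_cases i
        simpa using h
      · intro i hi
        have : i ≠ 0 := by omega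
        simp [this]
      · intro i hi; omega
  · have : IsEmpty {f : ℕ → V // IsPathFromTo G 1 p q f ∧ IsProperPath 1 f} := by
      refine ⟨fun f => h ?_⟩
      have := f.2.1.2.2.1 0 (by omega)
      rwa [f.2.1.1, f.2.1.2.1] at this
    exact Nat.card_of_isEmpty


lemma count_two [Fintype V] [DecidableEq V] (G : SimpleGraph V) [DecidableRel G.Adj]
    (p q : V) :
    properPathCount G 2 p q =
      if p = q then 0 else (G.neighborFinset p ∩ G.neighborFinset q).card := by
  unfold properPathCount
  split_ifs with h
  · subst h
    have : IsEmpty {f : ℕ → V // IsPathFromTo G 2 p p f ∧ IsProperPath 2 f} := by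
      refine ⟨fun f => f.2.2 0 (by omega) ?_⟩
      rw [f.2.1.2.1, f.2.1.1]
    exact Nat.card_of_isEmpty
  · have e : {f : ℕ → V // IsPathFromTo G 2 p q f ∧ IsProperPath 2 f} ≃
        {r : V // G.Adj p r ∧ G.Adj r q} := by
      refine ⟨fun f => ⟨f.1 1, ?_, ?_⟩,
        fun r => ⟨fun i => if i = 0 then p else if i = 1 then r.1 else q, ⟨by simp, by simp,
          ?_, ?_⟩, ?_⟩, ?_, ?_⟩
      · have := f.2.1.2.2.1 0 (by omega)
        rwa [f.2.1.1] at this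
      · have := f.2.1.2.2.1 1 (by omega)
        rwa [f.2.1.2.1] at this
      · intro i hi
        interval_cases i
        · simpa using r.2.1
        · simpa using r.2.2
      · intro i hi
        have h2 : i ≠ 0 := by omega
        have h3 : i ≠ 1 := by omega
        simp [h2, h3]
      · intro i hi
        have : i = 0 := by omega
        subst this
        simp [Ne.symm h]
      · rintro ⟨f, ⟨hf0, hf2, hadj, hpad⟩, hprop⟩
        ext i
        simp only
        match i with
        | 0 => simp [hf0]
        | 1 => simp
        | (n+2) => rw [hpad (n+2) (by omega), hf2]; simp
      · rintro ⟨r, hr⟩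
        rfl
    rw [Nat.card_congr e, Nat.card_eq_fintype_card, Fintype.card_subtype]
    congr 1
    ext r
    simp only [Finset.mem_filter, Finset.mem_univ, true_and, Finset.mem_inter,
      SimpleGraph.mem_neighborFinset]
    rw [G.adj_comm r q]

lemma key [Fintype V] [DecidableEq V] (G : SimpleGraph V) [DecidableRel G.Adj]
    (k : ℕ) (p q : V) :
    (properPathCount G (k + 3) p q : ℤ)
      + ((G.degree q : ℤ) - 1) * properPathCount G (k + 1) p q
      = ∑ r ∈ G.neighborFinset q, (properPathCount G (k + 2) p r : ℤ) := by
  classical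
  set P : V → (ℕ → V) → Prop :=
    fun r f => IsPathFromTo G (k + 2) p r f ∧ IsProperPath (k + 2) f with hP
  -- finiteness
  haveI hfin : ∀ r : V, ∀ Q : (ℕ → V) → Prop,
      Finite {f : ℕ → V // P r f ∧ Q f} := by
    intro r Q
    exact finite_subpad (k + 2) _ (fun f hf => hf.1.1.2.2.2)
  haveI f1 : Finite {x : V × (ℕ → V) // G.Adj q x.1 ∧ P x.1 x.2} :=
    finite_subpad_prod (k + 2) _ (fun x hx => hx.2.1.2.2.2)
  haveI f2 : Finite {x : V × (ℕ → V) // (G.Adj q x.1 ∧ P x.1 x.2) ∧ x.2 (k + 1) ≠ q} :=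
    finite_subpad_prod (k + 2) _ (fun x hx => hx.1.2.1.2.2.2)
  haveI f3 : Finite {x : V × (ℕ → V) // (G.Adj q x.1 ∧ P x.1 x.2) ∧ ¬ x.2 (k + 1) ≠ q} :=
    finite_subpad_prod (k + 2) _ (fun x hx => hx.1.2.1.2.2.2)
  haveI fH : Finite {f : ℕ → V // IsPathFromTo G (k+1) p q f ∧ IsProperPath (k+1) f} :=
    finite_paths G (k+1) p q
  -- Step A : total count
  have hA : Nat.card {x : V × (ℕ → V) // G.Adj q x.1 ∧ P x.1 x.2}
      = ∑ r ∈ G.neighborFinset q, properPathCount G (k + 2) p r := by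
    rw [Nat.card_congr (Equiv.subtypeProdEquivSigmaSubtype (fun a b => G.Adj q a ∧ P a b))]
    haveI : ∀ a : V, Finite {b : ℕ → V // G.Adj q a ∧ P a b} := by
      intro a
      exact finite_subpad (k + 2) _ (fun f hf => hf.2.1.2.2.2)
    rw [natCard_sigma]
    rw [← Finset.sum_subset (Finset.subset_univ (G.neighborFinset q))]
    · apply Finset.sum_congr rfl
      intro r hr
      rw [SimpleGraph.mem_neighborFinset] at hr
      unfold properPathCount
      exact Nat.card_congr (Equiv.subtypeEquivRight (fun b => by simp [hr, hP]))
    · intro r _ hr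
      rw [SimpleGraph.mem_neighborFinset] at hr
      haveI : IsEmpty {b : ℕ → V // G.Adj q r ∧ P r b} := ⟨fun b => hr b.2.1⟩
      exact Nat.card_of_isEmpty
  -- Step B : split by whether the second-to-last vertex is q
  have hB : Nat.card {x : V × (ℕ → V) // G.Adj q x.1 ∧ P x.1 x.2}
      = Nat.card {x : V × (ℕ → V) // (G.Adj q x.1 ∧ P x.1 x.2) ∧ x.2 (k + 1) ≠ q}
        + Nat.card {x : V × (ℕ → V) // (G.Adj q x.1 ∧ P x.1 x.2) ∧ ¬ x.2 (k + 1) ≠ q} :=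
    natCard_split _ _
  -- Step C : Good part counts proper paths of length k+3
  have hC : properPathCount G (k + 3) p q
      = Nat.card {x : V × (ℕ → V) // (G.Adj q x.1 ∧ P x.1 x.2) ∧ x.2 (k + 1) ≠ q} := by
    apply Nat.card_congr
    refine ⟨fun g => ⟨(g.1 (k + 2), fun i => g.1 (min i (k + 2))), ?_, ?_⟩,
      fun x => ⟨fun i => if i ≤ k + 2 then x.1.2 i else q, ?_⟩, ?_, ?_⟩
    · obtain ⟨g, ⟨hg0, hgj, hgadj, hgpad⟩, hgprop⟩ := g
      simp only [hP]
      refine ⟨?_, ⟨?_, ?_, ?_, ?_⟩, ?_⟩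
      · have h1 := hgadj (k + 2) (by omega)
        rw [hgj] at h1
        exact h1.symm
      · have h1 : min 0 (k + 2) = 0 := by omega
        simp only [h1, hg0]
      · simp only [min_self]
      · intro i hi
        have h1 : min i (k + 2) = i := by omega
        have h2 : min (i + 1) (k + 2) = i + 1 := by omega
        simp only [h1, h2]
        exact hgadj i (by omega)
      · intro i hi
        have h1 : min i (k + 2) = k + 2 := by omega
        simp only [h1, min_self]
      · intro i hi
        have h1 : min (i + 2) (k + 2) = i + 2 := by omega
        have h2 : min i (k + 2) = i := by omega
        simp only [h1, h2]
        exact hgprop i (by omega)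
    · obtain ⟨g, ⟨hg0, hgj, hgadj, hgpad⟩, hgprop⟩ := g
      have h1 : min (k + 1) (k + 2) = k + 1 := by omega
      simp only [h1]
      have h2 := hgprop (k + 1) (by omega)
      rw [hgj] at h2
      exact Ne.symm h2
    · obtain ⟨⟨r, f⟩, ⟨hadj, ⟨hf0, hfj, hfadj, hfpad⟩, hfprop⟩, hne⟩ := x
      dsimp only at hadj hf0 hfj hfadj hfpad hfprop hne ⊢
      refine ⟨⟨?_, ?_, ?_, ?_⟩, ?_⟩
      · simp only [Nat.zero_le, if_pos, hf0]
      · have h1 : ¬ (k + 3 ≤ k + 2) := by omega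
        simp only [h1, if_false]
      · intro i hi
        rcases Nat.lt_or_ge i (k + 2) with h2 | h2
        · have h3 : i ≤ k + 2 := by omega
          have h4 : i + 1 ≤ k + 2 := by omega
          simp only [h3, h4, if_pos]
          exact hfadj i h2
        · have h3 : i = k + 2 := by omega
          subst h3
          have h4 : ¬ (k + 2 + 1 ≤ k + 2) := by omega
          simp only [le_refl, if_pos, h4, if_false]
          rw [hfj]
          exact hadj.symm
      · intro i hi
        have h3 : ¬ (i ≤ k + 2) := by omega
        have h4 : ¬ (k + 3 ≤ k + 2) := by omega
        simp only [h3, h4, if_false]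
      · intro i hi
        rcases Nat.lt_or_ge (i + 2) (k + 3) with h2 | h2
        · have h3 : i + 2 ≤ k + 2 := by omega
          have h4 : i ≤ k + 2 := by omega
          simp only [h3, h4, if_pos]
          exact hfprop i (by omega)
        · have h3 : i = k + 1 := by omega
          subst h3
          have h4 : ¬ (k + 1 + 2 ≤ k + 2) := by omega
          have h5 : k + 1 ≤ k + 2 := by omega
          simp only [h4, if_false, h5, if_pos]
          exact Ne.symm hne
    · rintro ⟨g, ⟨hg0, hgj, hgadj, hgpad⟩, hgprop⟩
      apply Subtype.ext
      funext i
      dsimp only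
      rcases le_or_gt i (k + 2) with h1 | h1
      · rw [if_pos h1]
        congr 1
        omega
      · rw [if_neg (by omega), hgpad i (by omega), hgj]
    · rintro ⟨⟨r, f⟩, ⟨hadj, ⟨hf0, hfj, hfadj, hfpad⟩, hfprop⟩, hne⟩
      dsimp only at hadj hf0 hfj hfadj hfpad hfprop hne
      apply Subtype.ext
      dsimp only
      simp only [Prod.mk.injEq]
      constructor
      · rw [if_pos le_rfl, hfj]
      · funext i
        rw [if_pos (by omega : min i (k + 2) ≤ k + 2)]
        rcases le_or_gt i (k + 2) with h1 | h1
        · congr 1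
          omega
        · rw [(by omega : min i (k + 2) = k + 2), ← hfpad i (by omega)]
  -- Step D : Bad part
  have hD : (Nat.card {x : V × (ℕ → V) // (G.Adj q x.1 ∧ P x.1 x.2) ∧ ¬ x.2 (k + 1) ≠ q} : ℤ)
      = ((G.degree q : ℤ) - 1) * properPathCount G (k + 1) p q := by
    letI : Fintype {f : ℕ → V // IsPathFromTo G (k+1) p q f ∧ IsProperPath (k+1) f} :=
      Fintype.ofFinite _
    have e2 : {x : V × (ℕ → V) // (G.Adj q x.1 ∧ P x.1 x.2) ∧ ¬ x.2 (k + 1) ≠ q} ≃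
        Σ h : {f : ℕ → V // IsPathFromTo G (k+1) p q f ∧ IsProperPath (k+1) f},
          {r : V // G.Adj q r ∧ r ≠ h.1 k} := by
      refine ⟨fun x => ⟨⟨fun i => x.1.2 (min i (k + 1)), ?_⟩, ⟨x.1.1, ?_⟩⟩,
        fun y => ⟨(y.2.1, fun i => if i ≤ k + 1 then y.1.1 i else y.2.1), ?_⟩, ?_, ?_⟩
      · obtain ⟨⟨r, f⟩, ⟨hadj, ⟨hf0, hfj, hfadj, hfpad⟩, hfprop⟩, hne⟩ := x
        dsimp only at hadj hf0 hfj hfadj hfpad hfprop hne ⊢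
        simp only [not_not] at hne
        refine ⟨⟨?_, ?_, ?_, ?_⟩, ?_⟩
        · simp only [(by omega : min 0 (k + 1) = 0), hf0]
        · simp only [min_self, hne]
        · intro i hi
          simp only [(by omega : min i (k + 1) = i), (by omega : min (i + 1) (k + 1) = i + 1)]
          exact hfadj i (by omega)
        · intro i hi
          simp only [(by omega : min i (k + 1) = k + 1), min_self]
        · intro i hi
          simp only [(by omega : min (i + 2) (k + 1) = i + 2), (by omega : min i (k + 1) = i)]
          exact hfprop i (by omega)
      · obtain ⟨⟨r, f⟩, ⟨hadj, ⟨hf0, hfj, hfadj, hfpad⟩, hfprop⟩, hne⟩ := x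
        dsimp only at hadj hf0 hfj hfadj hfpad hfprop hne ⊢
        simp only [not_not] at hne
        refine ⟨hadj, ?_⟩
        simp only [(by omega : min k (k + 1) = k)]
        have := hfprop k (by omega)
        rw [hfj] at this
        exact this
      · obtain ⟨⟨h, ⟨hh0, hhj, hhadj, hhpad⟩, hhprop⟩, ⟨r, hr1, hr2⟩⟩ := y
        dsimp only at *
        refine ⟨⟨hr1, ⟨?_, ?_, ?_, ?_⟩, ?_⟩, ?_⟩
        · beta_reduce
          rw [if_pos (by omega : (0:ℕ) ≤ k + 1), hh0]
        · beta_reduce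
          rw [if_neg (by omega : ¬ (k + 2 ≤ k + 1))]
        · intro i hi
          beta_reduce
          rcases Nat.lt_or_ge i (k + 1) with h2 | h2
          · rw [if_pos (by omega : i ≤ k + 1), if_pos (by omega : i + 1 ≤ k + 1)]
            exact hhadj i h2
          · have h3 : i = k + 1 := by omega
            subst h3
            rw [if_pos le_rfl, if_neg (by omega : ¬ (k + 1 + 1 ≤ k + 1)), hhj]
            exact hr1
        · intro i hi
          beta_reduce
          rw [if_neg (by omega : ¬ (i ≤ k + 1)), if_neg (by omega : ¬ (k + 2 ≤ k + 1))]
        · intro i hi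
          beta_reduce
          rcases Nat.lt_or_ge (i + 2) (k + 2) with h2 | h2
          · rw [if_pos (by omega : i + 2 ≤ k + 1), if_pos (by omega : i ≤ k + 1)]
            exact hhprop i (by omega)
          · rw [(by omega : i = k)]
            rw [if_neg (by omega : ¬ (k + 2 ≤ k + 1)), if_pos (by omega : k ≤ k + 1)]
            exact hr2
        · simp only [not_not]
          beta_reduce
          rw [if_pos le_rfl, hhj]
      · rintro ⟨⟨r, f⟩, ⟨hadj, ⟨hf0, hfj, hfadj, hfpad⟩, hfprop⟩, hne⟩
        dsimp only at hadj hf0 hfj hfadj hfpad hfprop hne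
        apply Subtype.ext
        dsimp only
        simp only [Prod.mk.injEq]
        refine ⟨trivial, ?_⟩
        funext i
        rcases le_or_gt i (k + 1) with h1 | h1
        · rw [if_pos h1]
          congr 1
          omega
        · rw [if_neg (by omega), hfpad i (by omega), hfj]
      · rintro ⟨⟨h, ⟨hh0, hhj, hhadj, hhpad⟩, hhprop⟩, ⟨r, hr1, hr2⟩⟩
        refine Sigma.subtype_ext (Subtype.ext ?_) rfl
        dsimp only
        funext i
        rcases le_or_gt i (k + 1) with h1 | h1
        · simp only [(by omega : min i (k + 1) = i)]
          rw [if_pos h1]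
        · simp only [(by omega : min i (k + 1) = k + 1)]
          rw [if_pos le_rfl, hhpad i (by omega)]
    rw [Nat.card_congr e2, natCard_sigma]
    push_cast
    have hfib : ∀ h : {f : ℕ → V // IsPathFromTo G (k+1) p q f ∧ IsProperPath (k+1) f},
        ((Nat.card {r : V // G.Adj q r ∧ r ≠ h.1 k} : ℤ)) = (G.degree q : ℤ) - 1 := by
      intro h
      have hs : G.Adj q (h.1 k) := by
        have := h.2.1.2.2.1 k (by omega)
        rw [h.2.1.2.1] at this
        exact this.symm
      have hmem : h.1 k ∈ G.neighborFinset q := by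
        rwa [SimpleGraph.mem_neighborFinset]
      have hcard : Nat.card {r : V // G.Adj q r ∧ r ≠ h.1 k}
          = ((G.neighborFinset q).erase (h.1 k)).card := by
        rw [Nat.card_eq_fintype_card, Fintype.card_subtype]
        congr 1
        ext r
        simp [SimpleGraph.mem_neighborFinset, and_comm]
      rw [hcard, Finset.card_erase_of_mem hmem]
      have hpos : 1 ≤ (G.neighborFinset q).card := Finset.card_pos.mpr ⟨_, hmem⟩
      rw [Nat.cast_sub hpos, SimpleGraph.card_neighborFinset_eq_degree]
      norm_num
    rw [Finset.sum_congr rfl (fun h _ => hfib h), Finset.sum_const]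
    rw [properPathCount, Nat.card_eq_fintype_card, ← Finset.card_univ]
    push_cast
    ring
  -- assemble
  have hcast : ((Nat.card {x : V × (ℕ → V) // G.Adj q x.1 ∧ P x.1 x.2} : ℕ) : ℤ)
      = ∑ r ∈ G.neighborFinset q, (properPathCount G (k + 2) p r : ℤ) := by
    rw [hA]
    push_cast
    rfl
  rw [← hcast, hB, hC]
  push_cast
  rw [hD]

end AuxProofs

/-- For a finite graph with adjacency matrix `A`, degree matrix
`Deg` and `Q = Deg − I`, the entries of the recursively defined matrices `A_j`
count the proper (backtrack-free) paths of length `j` between the corresponding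
vertices. -/
theorem Aseq_entry_counts_proper_paths {V : Type*} [Fintype V] [DecidableEq V]
    (G : SimpleGraph V) [DecidableRel G.Adj] (j : ℕ) (p q : V) :
    Aseq (G.adjMatrix ℤ)
        (Matrix.diagonal (fun v : V => (G.degree v : ℤ)) - 1) j p q
      = (properPathCount G j p q : ℤ) := by
  induction j using Nat.strong_induction_on generalizing q with
  | _ j ih =>
  rcases j with (_ | _ | _ | k)
  · rw [count_zero]
    simp only [Aseq, Matrix.one_apply]
    split_ifs <;> simp
  · rw [count_one]
    simp only [Aseq, SimpleGraph.adjMatrix_apply]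
    split_ifs <;> simp
  · rw [count_two]
    simp only [Aseq, Matrix.sub_apply, Matrix.one_apply, Matrix.diagonal_apply]
    by_cases h : p = q
    · subst h
      rw [SimpleGraph.adjMatrix_mul_self_apply_self]
      simp
    · have hmul : (G.adjMatrix ℤ * G.adjMatrix ℤ) p q
          = ((G.neighborFinset p ∩ G.neighborFinset q).card : ℤ) := by
        rw [Matrix.mul_apply]
        have hterm : ∀ r : V, (G.adjMatrix ℤ) p r * (G.adjMatrix ℤ) r q
            = if r ∈ G.neighborFinset p ∩ G.neighborFinset q then (1 : ℤ) else 0 := by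
          intro r
          simp only [SimpleGraph.adjMatrix_apply, Finset.mem_inter,
            SimpleGraph.mem_neighborFinset]
          simp only [G.adj_comm r q]
          by_cases h1 : G.Adj p r <;> by_cases h2 : G.Adj q r <;> simp [h1, h2]
        rw [Finset.sum_congr rfl (fun r _ => hterm r), Finset.sum_boole]
        congr 1
        rw [Finset.filter_mem_eq_inter, Finset.univ_inter]
      rw [hmul]
      simp [h, Ne.symm h]
  · have hk2 := fun r => ih (k + 2) (by omega) r
    have hk1 := ih (k + 1) (by omega) q
    have hkey := key G k p q
    show (Aseq (G.adjMatrix ℤ) _ (k + 2) * G.adjMatrix ℤ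
        - Aseq (G.adjMatrix ℤ) _ (k + 1)
          * (Matrix.diagonal (fun v : V => (G.degree v : ℤ)) - 1)) p q = _
    rw [Matrix.sub_apply, Matrix.mul_apply, Matrix.mul_sub, Matrix.mul_one,
      Matrix.sub_apply, Matrix.mul_diagonal, hk1]
    have hterm : ∀ r : V,
        Aseq (G.adjMatrix ℤ) (Matrix.diagonal (fun v : V => (G.degree v : ℤ)) - 1) (k + 2) p r
            * (G.adjMatrix ℤ) r q
          = if r ∈ G.neighborFinset q then (properPathCount G (k + 2) p r : ℤ) else 0 := by
      intro r
      rw [hk2 r]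
      simp only [SimpleGraph.adjMatrix_apply, SimpleGraph.mem_neighborFinset]
      simp only [G.adj_comm r q]
      by_cases h1 : G.Adj q r <;> simp [h1]
    rw [Finset.sum_congr rfl (fun r _ => hterm r), Finset.sum_ite_mem, Finset.univ_inter]
    linarith [hkey]
end

section
/- Let G=(V,E) be a finite graph with all vertex degrees ≤ D, A its adjacency matrix, Q = Deg − I, and let A_0 = I, A_1 = A, A_2 = A² − Q − I, A_j = A_{j−1}·A − A_{j−2}·Q for j ≥ 3. Set R := (D + √(D² + 4D))/2. Then the operator norms of the A_j as operators on ℓ²(V) satisfy ‖A_j‖ ≤ R^j for all j ≥ 0. -/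
open scoped Matrix.Norms.L2Operator

lemma l2OpNorm_le_of_sq {V : Type*} [Fintype V] [DecidableEq V]
    (M : Matrix V V ℝ) (c : ℝ) (hc : 0 ≤ c)
    (h : ∀ x : V → ℝ, ∑ v, (M.mulVec x v) ^ 2 ≤ c ^ 2 * ∑ v, (x v) ^ 2) :
    ‖M‖ ≤ c := by
  rw [Matrix.l2_opNorm_def]
  apply ContinuousLinearMap.opNorm_le_bound _ hc
  intro x
  simp only [LinearEquiv.trans_apply, LinearMap.coe_toContinuousLinearMap',
    Matrix.toEuclideanLin_apply]
  rw [EuclideanSpace.norm_eq, EuclideanSpace.norm_eq]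
  simp only [Real.norm_eq_abs, sq_abs]
  have h1 := h (fun v => x v)
  calc √(∑ v, ((WithLp.equiv 2 (V → ℝ)).symm (M.mulVec ((WithLp.equiv 2 (V → ℝ)) x)) v) ^ 2)
      ≤ √(c ^ 2 * ∑ v, (x v) ^ 2) := by
        apply Real.sqrt_le_sqrt
        exact h (fun v => x v)
    _ = c * √(∑ v, (x v) ^ 2) := by
        rw [Real.sqrt_mul (sq_nonneg c), Real.sqrt_sq hc]


lemma l2OpNorm_diagonal_le {V : Type*} [Fintype V] [DecidableEq V]
    (d : V → ℝ) (c : ℝ) (hc : 0 ≤ c) (h : ∀ v, |d v| ≤ c) :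
    ‖Matrix.diagonal d‖ ≤ c := by
  apply l2OpNorm_le_of_sq _ _ hc
  intro x
  rw [Finset.mul_sum]
  apply Finset.sum_le_sum
  intro v _
  rw [Matrix.mulVec_diagonal, mul_pow]
  have : (d v) ^ 2 ≤ c ^ 2 := by
    rw [← sq_abs (d v)]
    exact pow_le_pow_left₀ (abs_nonneg _) (h v) 2
  nlinarith [sq_nonneg (x v)]

lemma l2OpNorm_adjMatrix_le {V : Type*} [Fintype V] [DecidableEq V]
    (G : SimpleGraph V) [DecidableRel G.Adj] (D : ℕ)
    (hdeg : ∀ v : V, G.degree v ≤ D) :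
    ‖G.adjMatrix ℝ‖ ≤ (D : ℝ) := by
  apply l2OpNorm_le_of_sq _ _ (Nat.cast_nonneg D)
  intro x
  have key : ∀ v, ((G.adjMatrix ℝ).mulVec x v) ^ 2
      ≤ (D : ℝ) * ∑ u ∈ G.neighborFinset v, (x u) ^ 2 := by
    intro v
    rw [SimpleGraph.adjMatrix_mulVec_apply]
    calc (∑ u ∈ G.neighborFinset v, x u) ^ 2
        = (∑ u ∈ G.neighborFinset v, 1 * x u) ^ 2 := by simp
      _ ≤ (∑ u ∈ G.neighborFinset v, (1:ℝ) ^ 2) * ∑ u ∈ G.neighborFinset v, (x u) ^ 2 :=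
          Finset.sum_mul_sq_le_sq_mul_sq _ _ _
      _ = (G.degree v : ℝ) * ∑ u ∈ G.neighborFinset v, (x u) ^ 2 := by
          rw [Finset.sum_const, SimpleGraph.card_neighborFinset_eq_degree]
          norm_num
      _ ≤ (D : ℝ) * ∑ u ∈ G.neighborFinset v, (x u) ^ 2 := by
          apply mul_le_mul_of_nonneg_right
          · exact_mod_cast hdeg v
          · exact Finset.sum_nonneg fun u _ => sq_nonneg _
  calc ∑ v, ((G.adjMatrix ℝ).mulVec x v) ^ 2
      ≤ ∑ v, (D : ℝ) * ∑ u ∈ G.neighborFinset v, (x u) ^ 2 :=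
        Finset.sum_le_sum fun v _ => key v
    _ = (D : ℝ) * ∑ v, ∑ u, if G.Adj v u then (x u) ^ 2 else 0 := by
        rw [← Finset.mul_sum]
        congr 1
        refine Finset.sum_congr rfl fun v _ => ?_
        rw [SimpleGraph.neighborFinset_eq_filter, Finset.sum_filter]
    _ = (D : ℝ) * ∑ u, (G.degree u : ℝ) * (x u) ^ 2 := by
        congr 1
        rw [Finset.sum_comm]
        refine Finset.sum_congr rfl fun u _ => ?_
        simp only [G.adj_comm _ u]
        rw [← Finset.sum_filter, ← SimpleGraph.neighborFinset_eq_filter, Finset.sum_const,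
          SimpleGraph.card_neighborFinset_eq_degree, nsmul_eq_mul]
    _ ≤ (D : ℝ) * ∑ u, (D:ℝ) * (x u) ^ 2 := by
        apply mul_le_mul_of_nonneg_left _ (Nat.cast_nonneg D)
        apply Finset.sum_le_sum
        intro u _
        apply mul_le_mul_of_nonneg_right _ (sq_nonneg _)
        exact_mod_cast hdeg u
    _ = (D:ℝ)^2 * ∑ v, (x v)^2 := by rw [← Finset.mul_sum]; ring

/-- The norm of a square real matrix as an operator on the Euclidean space `ℓ²(V)`. -/
noncomputable def l2OpNorm {V : Type*} [Fintype V] [DecidableEq V]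
    (M : Matrix V V ℝ) : ℝ :=
  ‖LinearMap.toContinuousLinearMap (Matrix.toEuclideanLin M)‖

lemma l2OpNorm_eq {V : Type*} [Fintype V] [DecidableEq V] (M : Matrix V V ℝ) :
    l2OpNorm M = ‖M‖ := rfl

lemma l2OpNorm_one_le {V : Type*} [Fintype V] [DecidableEq V] :
    ‖(1 : Matrix V V ℝ)‖ ≤ 1 := by
  rw [← Matrix.diagonal_one]
  exact l2OpNorm_diagonal_le _ 1 zero_le_one (fun v => by norm_num)

lemma Aseq_zero_neg_one {α : Type*} [Ring α] (j : ℕ) :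
    Aseq (0 : α) (-1) (j + 1) = 0 := by
  induction j using Nat.strong_induction_on with
  | _ j ih =>
    match j with
    | 0 => rfl
    | 1 => show (0:α) * 0 - (-1) - 1 = 0; simp
    | (k + 2) =>
      show Aseq (0:α) (-1) (k + 3) = 0
      show Aseq (0:α) (-1) (k+2) * 0 - Aseq (0:α) (-1) (k+1) * (-1) = 0
      rw [ih k (by omega)]
      simp

/-- For a finite graph with vertex degrees bounded by `D`,
the operators `A_j` on `ℓ²(V)` satisfy `‖A_j‖ ≤ R^j` with
`R = (D + √(D² + 4D))/2`. -/
theorem Aseq_opNorm_le {V : Type*} [Fintype V] [DecidableEq V]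
    (G : SimpleGraph V) [DecidableRel G.Adj] (D : ℕ)
    (hdeg : ∀ v : V, G.degree v ≤ D) (j : ℕ) :
    l2OpNorm (Aseq (G.adjMatrix ℝ)
        (Matrix.diagonal (fun v : V => (G.degree v : ℝ)) - 1) j)
      ≤ (((D : ℝ) + Real.sqrt ((D : ℝ) ^ 2 + 4 * D)) / 2) ^ j := by
  rw [l2OpNorm_eq]
  set R : ℝ := ((D : ℝ) + Real.sqrt ((D : ℝ) ^ 2 + 4 * D)) / 2 with hRdef
  have hs0 : 0 ≤ Real.sqrt ((D : ℝ) ^ 2 + 4 * D) := Real.sqrt_nonneg _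
  have hs2 : Real.sqrt ((D : ℝ) ^ 2 + 4 * D) ^ 2 = (D : ℝ) ^ 2 + 4 * D :=
    Real.sq_sqrt (by positivity)
  have hDR : (D : ℝ) ≤ R := by
    rw [hRdef]
    have h1 : Real.sqrt ((D:ℝ)^2) ≤ Real.sqrt ((D:ℝ)^2 + 4*D) := by
      apply Real.sqrt_le_sqrt
      have : (0:ℝ) ≤ 4 * D := by positivity
      linarith
    rw [Real.sqrt_sq (Nat.cast_nonneg D)] at h1
    linarith
  have hR0 : 0 ≤ R := le_trans (Nat.cast_nonneg D) hDR
  have hR2 : R ^ 2 = (D : ℝ) * R + D := by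
    rw [hRdef]; nlinarith [hs2]
  have hA : ‖G.adjMatrix ℝ‖ ≤ (D : ℝ) := l2OpNorm_adjMatrix_le G D hdeg
  have hDeg : ‖Matrix.diagonal (fun v : V => (G.degree v : ℝ))‖ ≤ (D : ℝ) := by
    apply l2OpNorm_diagonal_le _ _ (Nat.cast_nonneg D)
    intro v
    rw [abs_of_nonneg (Nat.cast_nonneg _)]
    exact_mod_cast hdeg v
  rcases Nat.eq_zero_or_pos D with hD | hD
  · -- D = 0 case
    subst hD
    have hA0 : G.adjMatrix ℝ = 0 := by
      ext v u
      simp only [SimpleGraph.adjMatrix_apply, Matrix.zero_apply, ite_eq_right_iff]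
      intro h
      have h1 : u ∈ G.neighborFinset v := (SimpleGraph.mem_neighborFinset G v u).2 h
      have h2 : G.neighborFinset v = ∅ := Finset.card_eq_zero.1 (by
        rw [SimpleGraph.card_neighborFinset_eq_degree]; exact Nat.le_zero.1 (hdeg v))
      rw [h2] at h1
      exact absurd h1 (Finset.notMem_empty u)
    have hQ0 : Matrix.diagonal (fun v : V => (G.degree v : ℝ)) - 1 = -1 := by
      have : ∀ v, (G.degree v : ℝ) = 0 := fun v => by
        exact_mod_cast Nat.le_zero.1 (hdeg v)
      simp [this, Matrix.diagonal_zero]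
    have hR : R = 0 := by rw [hRdef]; norm_num
    rw [hA0, hQ0, hR]
    match j with
    | 0 =>
      show ‖(1 : Matrix V V ℝ)‖ ≤ (0:ℝ) ^ 0
      rw [pow_zero]; exact l2OpNorm_one_le
    | (k+1) => rw [Aseq_zero_neg_one]; simp
  · -- D ≥ 1 case
    have hD1 : (1 : ℝ) ≤ D := by exact_mod_cast hD
    have hQ : ‖Matrix.diagonal (fun v : V => (G.degree v : ℝ)) - 1‖ ≤ (D : ℝ) := by
      have hdiag : (Matrix.diagonal fun v : V => (G.degree v : ℝ)) - 1
          = Matrix.diagonal (fun v : V => (G.degree v : ℝ) - 1) := by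
        ext v u
        by_cases h : v = u <;> simp [h, Matrix.one_apply, Matrix.diagonal]
      rw [hdiag]
      apply l2OpNorm_diagonal_le _ _ (Nat.cast_nonneg D)
      intro v
      rw [abs_le]
      constructor
      · have := Nat.cast_nonneg (α := ℝ) (G.degree v); linarith
      · have : (G.degree v : ℝ) ≤ D := by exact_mod_cast hdeg v
        linarith
    induction j using Nat.strong_induction_on with
    | _ j ih =>
      match j with
      | 0 =>
        show ‖(1 : Matrix V V ℝ)‖ ≤ R ^ 0
        rw [pow_zero]; exact l2OpNorm_one_le
      | 1 => rw [pow_one]; exact le_trans hA hDR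
      | 2 =>
        show ‖G.adjMatrix ℝ * G.adjMatrix ℝ -
          (Matrix.diagonal (fun v : V => (G.degree v : ℝ)) - 1) - 1‖ ≤ R ^ 2
        have heq : G.adjMatrix ℝ * G.adjMatrix ℝ -
            (Matrix.diagonal (fun v : V => (G.degree v : ℝ)) - 1) - 1 =
            G.adjMatrix ℝ * G.adjMatrix ℝ -
            Matrix.diagonal (fun v : V => (G.degree v : ℝ)) := by noncomm_ring
        rw [heq]
        calc ‖G.adjMatrix ℝ * G.adjMatrix ℝ -
            Matrix.diagonal (fun v : V => (G.degree v : ℝ))‖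
            ≤ ‖G.adjMatrix ℝ * G.adjMatrix ℝ‖ +
              ‖Matrix.diagonal (fun v : V => (G.degree v : ℝ))‖ := norm_sub_le _ _
          _ ≤ ‖G.adjMatrix ℝ‖ * ‖G.adjMatrix ℝ‖ + (D : ℝ) := by
              have := Matrix.l2_opNorm_mul (G.adjMatrix ℝ) (G.adjMatrix ℝ)
              linarith
          _ ≤ (D : ℝ) * D + D := by nlinarith [norm_nonneg (G.adjMatrix ℝ)]
          _ ≤ R ^ 2 := by nlinarith
      | (k + 3) =>
        have ih2 := ih (k + 2) (by omega)
        have ih1 := ih (k + 1) (by omega)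
        show ‖Aseq _ _ (k+2) * G.adjMatrix ℝ - Aseq _ _ (k+1) *
          (Matrix.diagonal (fun v : V => (G.degree v : ℝ)) - 1)‖ ≤ R ^ (k + 3)
        calc ‖Aseq _ _ (k+2) * G.adjMatrix ℝ - Aseq _ _ (k+1) *
            (Matrix.diagonal (fun v : V => (G.degree v : ℝ)) - 1)‖
            ≤ ‖Aseq _ _ (k+2) * G.adjMatrix ℝ‖ + ‖Aseq _ _ (k+1) *
              (Matrix.diagonal (fun v : V => (G.degree v : ℝ)) - 1)‖ := norm_sub_le _ _
          _ ≤ ‖Aseq _ _ (k+2)‖ * ‖G.adjMatrix ℝ‖ + ‖Aseq _ _ (k+1)‖ *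
              ‖Matrix.diagonal (fun v : V => (G.degree v : ℝ)) - 1‖ :=
              add_le_add (Matrix.l2_opNorm_mul _ _) (Matrix.l2_opNorm_mul _ _)
          _ ≤ R ^ (k+2) * D + R ^ (k+1) * D := by
              apply add_le_add
              · exact mul_le_mul ih2 hA (norm_nonneg _) (pow_nonneg hR0 _)
              · exact mul_le_mul ih1 hQ (norm_nonneg _) (pow_nonneg hR0 _)
          _ = R ^ (k+1) * ((D:ℝ) * R + D) := by ring
          _ = R ^ (k+1) * R ^ 2 := by rw [hR2]
          _ = R ^ (k+3) := by ring
end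

section
/- Let G=(V,E) be a graph in which every vertex has finite degree, let j ≥ 3 and let y ∈ V. For each neighbor x of y let t̃_j(x,y) be the number of proper closed paths of length j with a tail whose first edge is (x,y). Let t_{j−2}(y) be the number of proper closed paths of length j−2 with a tail starting at y, and let a_{j−2}(y,y) be the number of proper closed paths of length j−2 starting at y. Then Σ_{x : x ∼ y} t̃_j(x,y) = (deg(y) − 1)·t_{j−2}(y) + (deg(y) − 2)·(a_{j−2}(y,y) − t_{j−2}(y)). -/
/-- A closed path of length `n`, encoded as an `n`-periodic sequence of
adjacent vertices; its edges are `e_i = (c (i-1), c i)` for `1 ≤ i ≤ n`. -/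
def IsClosedPath {V : Type*} (G : SimpleGraph V) (n : ℕ) (c : ℕ → V) : Prop :=
  (∀ i, c (i + n) = c i) ∧ ∀ i, G.Adj (c i) (c (i + 1))

/-- A closed path of length `n` is proper (backtrack-free) if `e_{i+1} ≠ ē_i`
for `1 ≤ i ≤ n−1`, i.e. `c (i+2) ≠ c i` for `i + 2 ≤ n`. -/
def IsProperClosed {V : Type*} (n : ℕ) (c : ℕ → V) : Prop :=
  ∀ i, i + 2 ≤ n → c (i + 2) ≠ c i

/-- A closed path of length `n` has a tail if `e_n = ē_1`,
i.e. `c (n−1) = c 1`. -/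
def HasTail {V : Type*} (n : ℕ) (c : ℕ → V) : Prop := c (n - 1) = c 1

/-- `tailCountFrom G j x y`: the number of proper closed paths of length `j`
with a tail whose first edge is `(x, y)`. -/
noncomputable def tailCountFrom {V : Type*} (G : SimpleGraph V) (j : ℕ) (x y : V) : ℕ :=
  Nat.card {c : ℕ → V //
    IsClosedPath G j c ∧ IsProperClosed j c ∧ HasTail j c ∧ c 0 = x ∧ c 1 = y}

/-- `tailCount G j x`: the number of proper closed paths of length `j` with a
tail starting at `x`. -/
noncomputable def tailCount {V : Type*} (G : SimpleGraph V) (j : ℕ) (x : V) : ℕ :=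
  Nat.card {c : ℕ → V // IsClosedPath G j c ∧ IsProperClosed j c ∧ HasTail j c ∧ c 0 = x}

/-- `properClosedCount G j x` (= `a_j(x,x)`): the number of proper closed paths
of length `j` starting at `x`. -/
noncomputable def properClosedCount {V : Type*} (G : SimpleGraph V) (j : ℕ) (x : V) : ℕ :=
  Nat.card {c : ℕ → V // IsClosedPath G j c ∧ IsProperClosed j c ∧ c 0 = x}

/-!
Cutting the edges `(x, y)` and `(y, x)` off a proper closed path of length `n + 2` with a tail
and first edge `(x, y)` leaves a proper closed path of length `n` at `y` whose first and last
steps avoid `x`; conversely, any such path extends uniquely by the two edges. Summing over the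
neighbours `x` of `y` and exchanging the sums, each proper closed path `d` at `y` is counted
`deg y - #{d 1, d (n - 1)}` times, that is `deg y - 2` times plus once more if `d` has a tail.
-/

section Periodic

variable {α : Type*}

def periodize (n : ℕ) (f : ℕ → α) : ℕ → α := fun i => f (i % n)

theorem periodize_periodic (n : ℕ) (f : ℕ → α) : Function.Periodic (periodize n f) n :=
  fun i => by simp [periodize]

theorem periodize_of_lt {n i : ℕ} (f : ℕ → α) (h : i < n) : periodize n f i = f i := by
  simp [periodize, Nat.mod_eq_of_lt h]

theorem Function.Periodic.eq_of_eqOn_lt {c d : ℕ → α} {n : ℕ} (hc : Function.Periodic c n)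
    (hd : Function.Periodic d n) (hn : 0 < n) (h : ∀ i < n, c i = d i) : c = d :=
  funext fun i => by rw [← hc.map_mod_nat, ← hd.map_mod_nat]; exact h _ (Nat.mod_lt _ hn)

def prepend (x : α) (d : ℕ → α) : ℕ → α
  | 0 => x
  | i + 1 => d i

theorem periodize_shift_of_le {n i : ℕ} {c : ℕ → α} (ht : c (n + 1) = c 1) (hi : i ≤ n) :
    periodize n (fun i => c (i + 1)) i = c (i + 1) := by
  rcases hi.lt_or_eq with hi | rfl
  · exact periodize_of_lt _ hi
  · simp [periodize, ht]

theorem periodize_prepend_succ {n : ℕ} {x : α} {d : ℕ → α} {i : ℕ} (hi : i ≤ n) :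
    periodize (n + 2) (prepend x d) (i + 1) = d i :=
  periodize_of_lt _ (by omega)

end Periodic

theorem Finset.intCast_card_filter_ne_ne {α : Type*} [DecidableEq α] {s : Finset α} {a b : α}
    (ha : a ∈ s) (hb : b ∈ s) :
    ((s.filter fun x => x ≠ a ∧ x ≠ b).card : ℤ) = s.card - 2 + if a = b then 1 else 0 := by
  have hsub : {a, b} ⊆ s := Finset.insert_subset ha (Finset.singleton_subset_iff.2 hb)
  have hfilter : s.filter (fun x => x ≠ a ∧ x ≠ b) = s \ {a, b} := by
    ext x; simp
  rw [hfilter, Finset.card_sdiff_of_subset hsub, Nat.cast_sub (Finset.card_le_card hsub)]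
  by_cases hab : a = b
  · rw [hab, Finset.pair_eq_singleton, Finset.card_singleton, if_pos rfl]
    ring
  · rw [Finset.card_pair hab, if_neg hab]
    ring

theorem Set.Finite.natCard_subtype_mem_and {α : Type*} {s : Set α} (hs : s.Finite)
    (p : α → Prop) [DecidablePred p] :
    Nat.card {a // a ∈ s ∧ p a} = (hs.toFinset.filter p).card := by
  rw [← Nat.card_eq_finsetCard]
  exact Nat.card_congr (Equiv.subtypeEquivRight fun a => by simp)

section ClosedPaths

variable {V : Type*} {G : SimpleGraph V} {n : ℕ}

theorem IsClosedPath.periodic {c : ℕ → V} (hc : IsClosedPath G n c) : Function.Periodic c n :=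
  hc.1

theorem IsClosedPath.of_adj_lt (hn : 0 < n) {c : ℕ → V} (hc : Function.Periodic c n)
    (hadj : ∀ i < n, G.Adj (c i) (c (i + 1))) : IsClosedPath G n c := by
  refine ⟨hc, fun i => ?_⟩
  have h := hadj (i % n) (Nat.mod_lt _ hn)
  rwa [hc.map_mod_nat, ← hc.map_mod_nat (i % n + 1), Nat.mod_add_mod, hc.map_mod_nat] at h

theorem IsClosedPath.adj_pred {c : ℕ → V} (hc : IsClosedPath G n c) (hn : 0 < n) :
    G.Adj (c 0) (c (n - 1)) := by
  have h := hc.2 (n - 1)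
  rw [Nat.sub_add_cancel hn, hc.periodic.eq] at h
  exact h.symm

theorem SimpleGraph.LocallyFinite.finite_setOf_isClosedPath (hfin : G.LocallyFinite)
    (hn : 0 < n) (y : V) : {c : ℕ → V | IsClosedPath G n c ∧ c 0 = y}.Finite := by
  set S := {c : ℕ → V | IsClosedPath G n c ∧ c 0 = y}
  have hvalues : ∀ k, ((fun c : ℕ → V => c k) '' S).Finite := by
    intro k
    induction k with
    | zero => exact (Set.finite_singleton y).subset (by rintro _ ⟨c, hc, rfl⟩; exact hc.2)
    | succ k ih =>
      let := hfin
      refine (ih.biUnion fun v _ => (G.neighborSet v).toFinite).subset ?_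
      rintro _ ⟨c, hc, rfl⟩
      exact Set.mem_biUnion ⟨c, hc, rfl⟩ (hc.1.2 k)
  refine Set.Finite.of_finite_image (f := fun c (i : Fin n) => c i)
    ((Set.Finite.pi fun i : Fin n => hvalues i).subset ?_) ?_
  · rintro _ ⟨c, hc, rfl⟩ i _
    exact ⟨c, hc, rfl⟩
  · intro c hc d hd h
    exact hc.1.periodic.eq_of_eqOn_lt hd.1.periodic hn fun i hi => congrFun h ⟨i, hi⟩

def properClosedPaths (G : SimpleGraph V) (n : ℕ) (y : V) : Set (ℕ → V) :=
  {c | IsClosedPath G n c ∧ IsProperClosed n c ∧ c 0 = y}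

theorem SimpleGraph.LocallyFinite.finite_properClosedPaths (hfin : G.LocallyFinite)
    (hn : 0 < n) (y : V) : (properClosedPaths G n y).Finite :=
  (hfin.finite_setOf_isClosedPath hn y).subset fun _ hc => ⟨hc.1, hc.2.2⟩

theorem properClosedPaths_adj_one_and_adj_pred (hn : 0 < n) {y : V} {d : ℕ → V}
    (hd : d ∈ properClosedPaths G n y) : G.Adj y (d 1) ∧ G.Adj y (d (n - 1)) := by
  obtain ⟨hc, -, rfl⟩ := hd
  exact ⟨hc.2 0, hc.adj_pred hn⟩

theorem tailCount_eq_natCard (y : V) :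
    tailCount G n y = Nat.card {d // d ∈ properClosedPaths G n y ∧ HasTail n d} :=
  Nat.card_congr <| Equiv.subtypeEquivRight fun d => by
    simp only [properClosedPaths, Set.mem_ofPred_eq]
    tauto

end ClosedPaths

section TailPaths

variable {V : Type*} {G : SimpleGraph V} {n : ℕ} {x y : V}

theorem periodize_shift_mem_properClosedPaths (hn : 0 < n) {c : ℕ → V}
    (hc : IsClosedPath G (n + 2) c) (hp : IsProperClosed (n + 2) c) (ht : HasTail (n + 2) c)
    (h0 : c 0 = x) (h1 : c 1 = y) :
    periodize n (fun i => c (i + 1)) ∈ properClosedPaths G n y ∧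
      x ≠ periodize n (fun i => c (i + 1)) 1 ∧
      x ≠ periodize n (fun i => c (i + 1)) (n - 1) := by
  have hd : ∀ i ≤ n, periodize n (fun i => c (i + 1)) i = c (i + 1) :=
    fun i hi => periodize_shift_of_le ht hi
  refine ⟨⟨.of_adj_lt hn (periodize_periodic _ _) fun i hi => ?_, fun i hi => ?_, ?_⟩,
    ?_, ?_⟩
  · rw [hd i hi.le, hd (i + 1) hi]
    exact hc.2 (i + 1)
  · rw [hd _ hi, hd i (by omega)]
    exact hp (i + 1) (by omega)
  · rw [hd 0 n.zero_le, h1]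
  · rw [hd 1 hn, ← h0]
    exact (hp 0 (by omega)).symm
  · rw [hd _ (Nat.sub_le n 1), Nat.sub_add_cancel hn, ← h0, ← hc.periodic.eq]
    exact hp n le_rfl

theorem isClosedPath_periodize_prepend (hn : 0 < n) (hxy : G.Adj x y) {d : ℕ → V}
    (hd : d ∈ properClosedPaths G n y) (h1 : x ≠ d 1) (hlast : x ≠ d (n - 1)) :
    IsClosedPath G (n + 2) (periodize (n + 2) (prepend x d)) ∧
      IsProperClosed (n + 2) (periodize (n + 2) (prepend x d)) ∧
      HasTail (n + 2) (periodize (n + 2) (prepend x d)) ∧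
      periodize (n + 2) (prepend x d) 0 = x ∧ periodize (n + 2) (prepend x d) 1 = y := by
  obtain ⟨hdc, hdp, hd0⟩ := hd
  have hc0 : periodize (n + 2) (prepend x d) 0 = x := periodize_of_lt _ (by omega)
  have hcn : periodize (n + 2) (prepend x d) (n + 2) = x := by simp [periodize, prepend]
  have hcs : ∀ i ≤ n, periodize (n + 2) (prepend x d) (i + 1) = d i :=
    fun i hi => periodize_prepend_succ hi
  have hdn : d n = y := hdc.periodic.eq.trans hd0
  refine ⟨.of_adj_lt (by omega) (periodize_periodic _ _) fun i hi => ?_, fun i hi => ?_, ?_,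
    hc0, by rw [hcs 0 n.zero_le, hd0]⟩
  · rcases i with _ | k
    · rw [hc0, hcs 0 n.zero_le, hd0]
      exact hxy
    rw [hcs k (by omega)]
    rcases (show k < n ∨ k = n by omega) with hk | rfl
    · rw [hcs (k + 1) hk]
      exact hdc.2 k
    · rw [hcn, hdn]
      exact hxy.symm
  · rcases i with _ | k
    · rw [hc0, hcs 1 hn]
      exact h1.symm
    rw [hcs k (by omega)]
    rcases (show k + 2 ≤ n ∨ k + 1 = n by omega) with hk | hk
    · rw [hcs (k + 2) hk]
      exact hdp k hk
    · rw [show k + 1 + 2 = n + 2 by omega, hcn, show k = n - 1 by omega]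
      exact hlast
  · show periodize (n + 2) (prepend x d) (n + 1) = periodize (n + 2) (prepend x d) 1
    rw [hcs n le_rfl, hcs 0 n.zero_le, hdn, hd0]

def tailPathEquiv (hn : 0 < n) (hxy : G.Adj x y) :
    {c : ℕ → V // IsClosedPath G (n + 2) c ∧ IsProperClosed (n + 2) c ∧
      HasTail (n + 2) c ∧ c 0 = x ∧ c 1 = y} ≃
    {d : ℕ → V // d ∈ properClosedPaths G n y ∧ x ≠ d 1 ∧ x ≠ d (n - 1)} where
  toFun c := ⟨periodize n (fun i => c.1 (i + 1)),
    periodize_shift_mem_properClosedPaths hn c.2.1 c.2.2.1 c.2.2.2.1 c.2.2.2.2.1 c.2.2.2.2.2⟩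
  invFun d := ⟨periodize (n + 2) (prepend x d.1),
    isClosedPath_periodize_prepend hn hxy d.2.1 d.2.2.1 d.2.2.2⟩
  left_inv := by
    rintro ⟨c, hc, -, ht, h0, -⟩
    apply Subtype.ext
    dsimp only
    refine (periodize_periodic _ _).eq_of_eqOn_lt hc.periodic (by omega) ?_
    rintro (_ | i) hi
    · exact (periodize_of_lt _ (by omega)).trans h0.symm
    · exact (periodize_prepend_succ (by omega)).trans (periodize_shift_of_le ht (by omega))
  right_inv := by
    rintro ⟨d, hd, -⟩
    apply Subtype.ext
    dsimp only
    refine (periodize_periodic _ _).eq_of_eqOn_lt hd.1.periodic hn ?_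
    intro i hi
    exact (periodize_of_lt _ hi).trans (periodize_prepend_succ hi.le)

theorem tailCountFrom_add_two (hn : 0 < n) (hxy : G.Adj x y) :
    tailCountFrom G (n + 2) x y =
      Nat.card {d : ℕ → V // d ∈ properClosedPaths G n y ∧ x ≠ d 1 ∧ x ≠ d (n - 1)} :=
  Nat.card_congr (tailPathEquiv hn hxy)

end TailPaths

/-- In a locally finite graph, for `j ≥ 3` and a vertex `y`:
`∑_{x ∼ y} t̃_j(x,y) = (deg(y) − 1)·t_{j−2}(y) + (deg(y) − 2)·(a_{j−2}(y,y) − t_{j−2}(y))`. -/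
theorem tail_extension_count {V : Type*} (G : SimpleGraph V)
    (hfin : G.LocallyFinite) (j : ℕ) (hj : 3 ≤ j) (y : V) :
    (∑ᶠ x ∈ G.neighborSet y, (tailCountFrom G j x y : ℤ))
      = (((G.neighborSet y).ncard : ℤ) - 1) * (tailCount G (j - 2) y : ℤ)
        + (((G.neighborSet y).ncard : ℤ) - 2)
          * ((properClosedCount G (j - 2) y : ℤ) - (tailCount G (j - 2) y : ℤ)) := by
  classical
  obtain ⟨n, rfl⟩ : ∃ n, j = n + 2 := ⟨j - 2, by omega⟩
  have hn : 0 < n := by omega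
  let := hfin
  have hP := hfin.finite_properClosedPaths hn y
  set Q := hP.toFinset
  set N := G.neighborFinset y
  have hcount : ∀ x ∈ N,
      tailCountFrom G (n + 2) x y = (Q.filter fun d => x ≠ d 1 ∧ x ≠ d (n - 1)).card :=
    fun x hx => (tailCountFrom_add_two hn ((G.mem_neighborFinset _ _).1 hx).symm).trans
      (hP.natCard_subtype_mem_and _)
  have hends : ∀ d ∈ Q, d 1 ∈ N ∧ d (n - 1) ∈ N := fun d hd => by
    simpa only [N, SimpleGraph.mem_neighborFinset] using
      properClosedPaths_adj_one_and_adj_pred hn (hP.mem_toFinset.1 hd)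
  rw [Nat.add_sub_cancel, ← SimpleGraph.coe_neighborFinset, finsum_mem_coe_finset,
    Set.ncard_coe_finset, tailCount_eq_natCard, hP.natCard_subtype_mem_and,
    show properClosedCount G n y = Q.card from Set.ncard_eq_toFinset_card _ hP]
  calc ∑ x ∈ N, (tailCountFrom G (n + 2) x y : ℤ)
      = ∑ x ∈ N, ((Q.filter fun d => x ≠ d 1 ∧ x ≠ d (n - 1)).card : ℤ) :=
        Finset.sum_congr rfl fun x hx => by rw [hcount x hx]
    _ = ∑ d ∈ Q, ((N.filter fun x => x ≠ d 1 ∧ x ≠ d (n - 1)).card : ℤ) := by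
        exact_mod_cast Finset.sum_card_bipartiteAbove_eq_sum_card_bipartiteBelow _
    _ = ∑ d ∈ Q, ((N.card : ℤ) - 2 + if HasTail n d then 1 else 0) :=
        Finset.sum_congr rfl fun d hd => by
          rw [Finset.intCast_card_filter_ne_ne (hends d hd).1 (hends d hd).2, HasTail,
            @eq_comm _ (d (n - 1))]
    _ = _ := by
        rw [Finset.sum_add_distrib, Finset.sum_const, Finset.sum_boole, nsmul_eq_mul]
        ring
end

section
/- Let G=(V,E) be a finite graph. For j ≥ 1 let t_j := Σ_{x∈V} t_j(x), where t_j(x) is the number of proper closed paths of length j with a tail starting at x, and let a_j(y,y) denote the number of proper closed paths of length j starting at y. Then t_1 = t_2 = 0, and for every j ≥ 3, t_j = t_{j−2} + Σ_{y∈V} (deg(y) − 2)·a_{j−2}(y,y). -/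
section
variable {V : Type*} (G : SimpleGraph V)

lemma periodic_mod {c : ℕ → V} {n : ℕ} (hn : 0 < n) (h : ∀ i, c (i + n) = c i) :
    ∀ i, c i = c (i % n) := by
  intro i
  induction i using Nat.strong_induction_on with
  | _ i ih =>
    rcases lt_or_ge i n with hi | hi
    · rw [Nat.mod_eq_of_lt hi]
    · have h1 : i - n + n = i := Nat.sub_add_cancel hi
      have h2 := h (i - n)
      rw [h1] at h2
      rw [h2, ih (i - n) (by omega), Nat.mod_eq_sub_mod hi]

noncomputable def mainEquiv (k : ℕ) (hk : 3 ≤ k) (y : V) :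
    {c : ℕ → V // IsClosedPath G (k+2) c ∧ IsProperClosed (k+2) c ∧ HasTail (k+2) c ∧ c 1 = y}
    ≃ Σ d : {d : ℕ → V // IsClosedPath G k d ∧ IsProperClosed k d ∧ d 0 = y},
        {x : V // G.Adj y x ∧ x ≠ d.1 1 ∧ x ≠ d.1 (k-1)} where
  toFun := fun ⟨c, ⟨hper, hadj⟩, hprop, htail, hc1⟩ =>
    ⟨⟨fun i => c (i % k + 1), by
      have htail' : c (k + 1) = c 1 := htail
      have h1k : 1 % k = 1 := Nat.mod_eq_of_lt (by omega)
      refine ⟨⟨?_, ?_⟩, ?_, ?_⟩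
      · intro i; simp [Nat.add_mod_right]
      · intro i
        show G.Adj (c (i % k + 1)) (c ((i + 1) % k + 1))
        have hmod : (i + 1) % k = (i % k + 1) % k := by rw [Nat.add_mod, h1k]
        have hrk : i % k < k := Nat.mod_lt _ (by omega)
        rcases eq_or_lt_of_le (Nat.succ_le_of_lt hrk) with he | hlt
        · have hik : i % k + 1 = k := he
          have h2 : (i + 1) % k = 0 := by rw [hmod, hik, Nat.mod_self]
          rw [h2, hik, zero_add, ← htail']
          exact hadj k
        · have h2 : (i + 1) % k = i % k + 1 := by
            rw [hmod]; exact Nat.mod_eq_of_lt (by omega)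
          rw [h2]
          exact hadj (i % k + 1)
      · intro i hik
        show c ((i + 2) % k + 1) ≠ c (i % k + 1)
        have hi : i % k = i := Nat.mod_eq_of_lt (by omega)
        rw [hi]
        rcases eq_or_lt_of_le hik with he | hlt
        · have h1 : (i + 2) % k = 0 := by rw [he, Nat.mod_self]
          rw [h1, zero_add, ← htail']
          have h3 := hprop (i + 1) (by omega)
          have h4 : i + 1 + 2 = k + 1 := by omega
          rw [h4] at h3
          exact h3
        · have h1 : (i + 2) % k = i + 2 := Nat.mod_eq_of_lt hlt
          rw [h1]
          exact hprop (i + 1) (by omega)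
      · show c (0 % k + 1) = y
        rw [Nat.zero_mod, zero_add]; exact hc1⟩,
     ⟨c 0, by
      refine ⟨?_, ?_, ?_⟩
      · rw [← hc1]; exact (hadj 0).symm
      · show c 0 ≠ c (1 % k + 1)
        have h1k : 1 % k = 1 := Nat.mod_eq_of_lt (by omega)
        rw [h1k]
        exact fun h => hprop 0 (by omega) h.symm
      · show c 0 ≠ c ((k - 1) % k + 1)
        have h1 : (k - 1) % k = k - 1 := Nat.mod_eq_of_lt (by omega)
        have h2 : k - 1 + 1 = k := by omega
        rw [h1, h2]
        intro h
        have h3 := hprop k (by omega)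
        have h4 := hper 0
        rw [zero_add] at h4
        rw [h4] at h3
        exact h3 h⟩⟩
  invFun := fun ⟨⟨d, ⟨hdper, hdadj⟩, hdprop, hd0⟩, ⟨x, hxy, hx1, hxk⟩⟩ =>
    ⟨fun i => if i % (k+2) = 0 then x else d (i % (k+2) - 1), by
      have hdk : d k = y := by
        have := hdper 0; rw [zero_add] at this; rw [this, hd0]
      have h1k2 : 1 % (k+2) = 1 := Nat.mod_eq_of_lt (by omega)
      refine ⟨⟨?_, ?_⟩, ?_, ?_, ?_⟩
      · intro i; simp [Nat.add_mod_right]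
      · intro i
        show G.Adj (if i % (k+2) = 0 then x else d (i % (k+2) - 1))
          (if (i + 1) % (k+2) = 0 then x else d ((i + 1) % (k+2) - 1))
        have hmod : (i + 1) % (k+2) = (i % (k+2) + 1) % (k+2) := by rw [Nat.add_mod, h1k2]
        have hrk : i % (k+2) < k + 2 := Nat.mod_lt _ (by omega)
        rcases Nat.eq_zero_or_pos (i % (k+2)) with h0 | h0
        · have h2 : (i + 1) % (k+2) = 1 := by rw [hmod, h0, zero_add]; exact h1k2
          rw [if_pos h0, h2, if_neg (by omega)]
          simpa [hd0] using hxy.symm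
        · rcases eq_or_lt_of_le (Nat.succ_le_of_lt hrk) with he | hlt
          · have hik : i % (k+2) = k + 1 := by omega
            have h2 : (i + 1) % (k+2) = 0 := by
              rw [hmod, hik]
              have : k + 1 + 1 = k + 2 := rfl
              rw [this, Nat.mod_self]
            rw [if_neg (by omega), h2, if_pos rfl, hik]
            have h3 : k + 1 - 1 = k := rfl
            rw [h3, hdk]
            exact hxy
          · have h2 : (i + 1) % (k+2) = i % (k+2) + 1 := by
              rw [hmod]; exact Nat.mod_eq_of_lt (by omega)
            rw [if_neg (by omega), h2, if_neg (by omega)]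
            have h3 := hdadj (i % (k+2) - 1)
            have h4 : i % (k+2) - 1 + 1 = i % (k+2) := by omega
            rw [h4] at h3
            have h5 : i % (k+2) + 1 - 1 = i % (k+2) := rfl
            rw [h5]
            exact h3
      · intro i hik
        show (if (i + 2) % (k+2) = 0 then x else d ((i + 2) % (k+2) - 1))
          ≠ (if i % (k+2) = 0 then x else d (i % (k+2) - 1))
        have hi : i % (k+2) = i := Nat.mod_eq_of_lt (by omega)
        rw [hi]
        rcases eq_or_lt_of_le hik with he | hlt
        · have hik' : i = k := by omega
          have h1 : (i + 2) % (k+2) = 0 := by rw [he, Nat.mod_self]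
          rw [h1, if_pos rfl, if_neg (by omega)]
          rw [hik']
          exact hxk
        · have h1 : (i + 2) % (k+2) = i + 2 := Nat.mod_eq_of_lt hlt
          rcases Nat.eq_zero_or_pos i with h0 | h0
          · subst h0
            rw [h1, if_neg (by omega), if_pos rfl]
            exact fun h => hx1 h.symm
          · rw [h1, if_neg (by omega), if_neg (by omega)]
            have h2 : i + 2 - 1 = i + 1 := rfl
            rw [h2]
            rcases eq_or_lt_of_le (show i + 2 ≤ k + 1 by omega) with he2 | hlt2
            · have h3 : i + 1 = k := by omega
              have h4 : i - 1 = k - 2 := by omega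
              rw [h3, h4, hdk]
              have h5 := hdprop (k - 2) (by omega)
              have h6 : k - 2 + 2 = k := by omega
              rw [h6] at h5
              rw [← hdk]
              exact h5
            · have h3 : i + 1 = i - 1 + 2 := by omega
              rw [h3]
              exact hdprop (i - 1) (by omega)
      · show (if (k + 2 - 1) % (k+2) = 0 then x else d ((k + 2 - 1) % (k+2) - 1))
          = (if 1 % (k+2) = 0 then x else d (1 % (k+2) - 1))
        have h1 : (k + 2 - 1) % (k + 2) = k + 1 := Nat.mod_eq_of_lt (by omega)
        rw [h1, h1k2, if_neg (by omega), if_neg (by omega)]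
        have h2 : k + 1 - 1 = k := rfl
        rw [h2, hdk, ← hd0]
      · show (if 1 % (k+2) = 0 then x else d (1 % (k+2) - 1)) = y
        rw [h1k2, if_neg (by omega)]
        simpa using hd0⟩
  left_inv := by
    rintro ⟨c, ⟨hper, hadj⟩, hprop, htail, hc1⟩
    apply Subtype.ext
    funext i
    show (if i % (k+2) = 0 then c 0 else c ((i % (k+2) - 1) % k + 1)) = c i
    have htail' : c (k + 1) = c 1 := htail
    have hmod := periodic_mod (show 0 < k + 2 by omega) hper
    have hrk : i % (k+2) < k + 2 := Nat.mod_lt _ (by omega)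
    rcases Nat.eq_zero_or_pos (i % (k+2)) with h0 | h0
    · rw [if_pos h0, hmod i, h0]
    · rw [if_neg (by omega)]
      rcases eq_or_lt_of_le (Nat.succ_le_of_lt hrk) with he | hlt
      · have hik : i % (k+2) = k + 1 := by omega
        have h1 : (i % (k+2) - 1) % k = 0 := by
          rw [hik]
          have : k + 1 - 1 = k := rfl
          rw [this, Nat.mod_self]
        rw [h1, zero_add, ← htail', hmod i, hik]
      · have h1 : (i % (k+2) - 1) % k = i % (k+2) - 1 := Nat.mod_eq_of_lt (by omega)
        rw [h1, hmod i]
        congr 1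
        omega
  right_inv := by
    rintro ⟨⟨d, ⟨hdper, hdadj⟩, hdprop, hd0⟩, ⟨x, hxy, hx1, hxk⟩⟩
    apply Sigma.subtype_ext
    · apply Subtype.ext
      funext i
      show (if (i % k + 1) % (k+2) = 0 then x else d ((i % k + 1) % (k+2) - 1)) = d i
      have hs : i % k < k := Nat.mod_lt _ (by omega)
      have h1 : (i % k + 1) % (k + 2) = i % k + 1 := Nat.mod_eq_of_lt (by omega)
      rw [h1, if_neg (by omega)]
      have h2 : i % k + 1 - 1 = i % k := rfl
      rw [h2]
      exact (periodic_mod (show 0 < k by omega) hdper i).symm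
    · show (if 0 % (k+2) = 0 then x else d (0 % (k+2) - 1)) = x
      rw [if_pos (Nat.zero_mod _)]
end

section counting
variable {V : Type*} (G : SimpleGraph V)

lemma nat_card_empty {P : (ℕ → V) → Prop} (h : ∀ c, ¬ P c) :
    Nat.card {c : ℕ → V // P c} = 0 := by
  haveI : IsEmpty {c : ℕ → V // P c} := ⟨fun ⟨c, hc⟩ => h c hc⟩
  exact Nat.card_of_isEmpty

lemma finite_periodic_subtype [Finite V] {n : ℕ} (hn : 0 < n) (P : (ℕ → V) → Prop)
    (hP : ∀ c, P c → ∀ i, c (i + n) = c i) : Finite {c : ℕ → V // P c} := by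
  have hinj : Function.Injective
      (fun c : {c : ℕ → V // P c} => (fun i : Fin n => c.1 i)) := by
    rintro ⟨c, hc⟩ ⟨c', hc'⟩ h
    simp only [Subtype.mk.injEq]
    funext i
    rw [periodic_mod hn (hP c hc) i, periodic_mod hn (hP c' hc') i]
    exact congrFun h ⟨i % n, Nat.mod_lt _ hn⟩
  exact Finite.of_injective _ hinj

lemma nat_card_sigma {ι : Type*} [Fintype ι] (g : ι → Type*) [∀ i, Finite (g i)] :
    Nat.card (Σ i, g i) = ∑ i, Nat.card (g i) := by
  haveI : ∀ i, Fintype (g i) := fun i => Fintype.ofFinite _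
  simp only [Nat.card_eq_fintype_card]
  exact Fintype.card_sigma

lemma card_fiber_sum [Fintype V] (P : (ℕ → V) → Prop) (n : ℕ) (hn : 0 < n)
    (hP : ∀ c, P c → ∀ i, c (i + n) = c i) (f : (ℕ → V) → V) :
    Nat.card {c : ℕ → V // P c} = ∑ v : V, Nat.card {c : ℕ → V // P c ∧ f c = v} := by
  haveI : Finite {c : ℕ → V // P c} := finite_periodic_subtype hn P hP
  haveI : ∀ v : V, Finite {c : ℕ → V // P c ∧ f c = v} := fun v =>
    finite_periodic_subtype hn _ (fun c hc => hP c hc.1)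
  have e : {c : ℕ → V // P c} ≃ Σ v : V, {c : ℕ → V // P c ∧ f c = v} :=
    { toFun := fun c => ⟨f c.1, ⟨c.1, c.2, rfl⟩⟩
      invFun := fun p => ⟨p.2.1, p.2.2.1⟩
      left_inv := fun c => rfl
      right_inv := fun p => Sigma.subtype_ext p.2.2.2 rfl }
  rw [Nat.card_congr e, nat_card_sigma]

lemma card_x [Fintype V] [DecidableEq V] (y a b : V) (ha : G.Adj y a) (hb : G.Adj y b) :
    (Nat.card {x : V // G.Adj y x ∧ x ≠ a ∧ x ≠ b} : ℤ)
      = ((G.neighborSet y).ncard : ℤ) - 2 + (if b = a then 1 else 0) := by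
  have hset : {x : V | G.Adj y x ∧ x ≠ a ∧ x ≠ b} = G.neighborSet y \ {a, b} := by
    ext x
    simp only [Set.mem_setOf_eq, Set.mem_diff, SimpleGraph.mem_neighborSet,
      Set.mem_insert_iff, Set.mem_singleton_iff]
    tauto
  have h1 : Nat.card {x : V // G.Adj y x ∧ x ≠ a ∧ x ≠ b}
      = ({x : V | G.Adj y x ∧ x ≠ a ∧ x ≠ b} : Set V).ncard :=
    Nat.card_coe_set_eq _
  rw [h1, hset]
  have hsub : ({a, b} : Set V) ⊆ G.neighborSet y := by
    intro z hz
    rcases hz with hz | hz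
    · subst hz; exact ha
    · simp only [Set.mem_singleton_iff] at hz; subst hz; exact hb
  rw [Set.ncard_diff hsub (Set.toFinite _)]
  have hle : ({a, b} : Set V).ncard ≤ (G.neighborSet y).ncard :=
    Set.ncard_le_ncard hsub (Set.toFinite _)
  rcases eq_or_ne b a with hba | hba
  · subst hba
    have : ({b, b} : Set V).ncard = 1 := by simp
    rw [this] at hle ⊢
    rw [if_pos rfl]
    push_cast [Nat.cast_sub hle]
    omega
  · have : ({a, b} : Set V).ncard = 2 := Set.ncard_pair (Ne.symm hba)
    rw [this] at hle ⊢
    rw [if_neg hba]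
    push_cast [Nat.cast_sub hle]
    omega

end counting

section assembly
variable {V : Type*} (G : SimpleGraph V)

lemma tailCount_one (x : V) : tailCount G 1 x = 0 :=
  nat_card_empty fun c ⟨⟨hper, hadj⟩, _, _, _⟩ => by
    have h0 := hadj 0
    have h1 := hper 0
    rw [zero_add] at h1
    rw [h1] at h0
    exact h0.ne rfl

lemma tailCount_two (x : V) : tailCount G 2 x = 0 :=
  nat_card_empty fun c ⟨⟨hper, _⟩, hprop, _, _⟩ => by
    have h1 := hper 0
    rw [zero_add] at h1
    exact hprop 0 (by omega) h1

lemma properClosedCount_one (x : V) : properClosedCount G 1 x = 0 :=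
  nat_card_empty fun c ⟨⟨hper, hadj⟩, _, _⟩ => by
    have h0 := hadj 0
    have h1 := hper 0
    rw [zero_add] at h1
    rw [h1] at h0
    exact h0.ne rfl

lemma properClosedCount_two (x : V) : properClosedCount G 2 x = 0 :=
  nat_card_empty fun c ⟨⟨hper, _⟩, hprop, _⟩ => by
    have h1 := hper 0
    rw [zero_add] at h1
    exact hprop 0 (by omega) h1

lemma tailCount_three (x : V) : tailCount G 3 x = 0 :=
  nat_card_empty fun c ⟨⟨_, hadj⟩, _, htail, _⟩ => by
    have h0 := hadj 1
    have htail' : c 2 = c 1 := htail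
    have h2 : (1 : ℕ) + 1 = 2 := rfl
    rw [h2] at h0
    exact h0.ne' htail'

lemma tailCount_four (x : V) : tailCount G 4 x = 0 :=
  nat_card_empty fun c ⟨_, hprop, htail, _⟩ => by
    have htail' : c 3 = c 1 := htail
    have h2 := hprop 1 (by omega)
    have h3 : (1 : ℕ) + 2 = 3 := rfl
    rw [h3] at h2
    exact h2 htail'

lemma tailCount_eq_sum [Fintype V] {j : ℕ} (hj : 0 < j) (x : V) :
    tailCount G j x = ∑ y : V, tailCountFrom G j x y := by
  rw [tailCount, card_fiber_sum _ j hj (fun c hc => hc.1.1) (fun c => c 1)]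
  refine Finset.sum_congr rfl fun y _ => ?_
  rw [tailCountFrom]
  exact Nat.card_congr (Equiv.subtypeEquivRight (fun c => by tauto))

lemma sum_tailCountFrom [Fintype V] {j : ℕ} (hj : 0 < j) (y : V) :
    ∑ x : V, tailCountFrom G j x y
      = Nat.card {c : ℕ → V //
          IsClosedPath G j c ∧ IsProperClosed j c ∧ HasTail j c ∧ c 1 = y} := by
  rw [card_fiber_sum
    (fun c => IsClosedPath G j c ∧ IsProperClosed j c ∧ HasTail j c ∧ c 1 = y)
    j hj (fun c hc => hc.1.1) (fun c => c 0)]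
  refine Finset.sum_congr rfl fun x _ => ?_
  rw [tailCountFrom]
  exact Nat.card_congr (Equiv.subtypeEquivRight (fun c => by tauto))

lemma big_step [Fintype V] [DecidableEq V] {k : ℕ} (hk : 3 ≤ k) (y : V) :
    ((Nat.card {c : ℕ → V //
        IsClosedPath G (k+2) c ∧ IsProperClosed (k+2) c ∧ HasTail (k+2) c ∧ c 1 = y} : ℕ) : ℤ)
      = (((G.neighborSet y).ncard : ℤ) - 2) * properClosedCount G k y + tailCount G k y := by
  haveI hD : Finite {d : ℕ → V // IsClosedPath G k d ∧ IsProperClosed k d ∧ d 0 = y} :=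
    finite_periodic_subtype (by omega) _ (fun c hc => hc.1.1)
  haveI := Fintype.ofFinite {d : ℕ → V // IsClosedPath G k d ∧ IsProperClosed k d ∧ d 0 = y}
  rw [Nat.card_congr (mainEquiv G k hk y), nat_card_sigma]
  push_cast
  have hterm : ∀ d : {d : ℕ → V // IsClosedPath G k d ∧ IsProperClosed k d ∧ d 0 = y},
      (Nat.card {x : V // G.Adj y x ∧ x ≠ d.1 1 ∧ x ≠ d.1 (k-1)} : ℤ)
        = ((G.neighborSet y).ncard : ℤ) - 2
            + (if d.1 (k-1) = d.1 1 then 1 else 0) := by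
    intro d
    apply card_x
    · have h0 := d.2.1.2 0
      rw [zero_add] at h0
      rwa [d.2.2.2] at h0
    · have h0 := d.2.1.2 (k-1)
      have h1 : k - 1 + 1 = k := by omega
      rw [h1] at h0
      have h2 := d.2.1.1 0
      rw [zero_add] at h2
      rw [h2, d.2.2.2] at h0
      exact h0.symm
  rw [Finset.sum_congr rfl (fun d _ => hterm d)]
  rw [Finset.sum_add_distrib]
  rw [Finset.sum_const]
  rw [Finset.sum_boole]
  have h1 : (Finset.univ (α := {d : ℕ → V //
        IsClosedPath G k d ∧ IsProperClosed k d ∧ d 0 = y})).card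
      = properClosedCount G k y := by
    rw [Finset.card_univ, properClosedCount, Nat.card_eq_fintype_card]
  have h2 : (Finset.filter (fun d : {d : ℕ → V //
        IsClosedPath G k d ∧ IsProperClosed k d ∧ d 0 = y} => d.1 (k-1) = d.1 1)
        Finset.univ).card = tailCount G k y := by
    rw [← Fintype.card_subtype, ← Nat.card_eq_fintype_card, tailCount]
    refine Nat.card_congr ((Equiv.subtypeSubtypeEquivSubtypeInter
      (fun d : ℕ → V => IsClosedPath G k d ∧ IsProperClosed k d ∧ d 0 = y)
      (fun d => d (k-1) = d 1)).trans
      (Equiv.subtypeEquivRight fun c =>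
        ⟨fun ⟨⟨a, b, cc⟩, d⟩ => ⟨a, b, d, cc⟩, fun ⟨a, b, d, cc⟩ => ⟨⟨a, b, cc⟩, d⟩⟩))
  rw [h1, h2, nsmul_eq_mul]
  ring

end assembly


/-- For a finite graph, with `t_j = ∑_x t_j(x)` the total
number of proper closed paths of length `j` with tail: `t_1 = t_2 = 0` and,
for `j ≥ 3`, `t_j = t_{j−2} + ∑_y (deg(y) − 2)·a_{j−2}(y,y)`. -/
theorem tail_count_recursion {V : Type*} [Fintype V] (G : SimpleGraph V) :
    (∑ x : V, tailCount G 1 x) = 0 ∧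
    (∑ x : V, tailCount G 2 x) = 0 ∧
    ∀ j : ℕ, 3 ≤ j →
      (∑ x : V, (tailCount G j x : ℤ))
        = (∑ x : V, (tailCount G (j - 2) x : ℤ))
          + ∑ y : V, (((G.neighborSet y).ncard : ℤ) - 2)
              * (properClosedCount G (j - 2) y : ℤ) := by
  classical
  refine ⟨Finset.sum_eq_zero fun x _ => tailCount_one G x,
    Finset.sum_eq_zero fun x _ => tailCount_two G x, ?_⟩
  intro j hj
  obtain ⟨k, rfl⟩ : ∃ k, j = k + 2 := ⟨j - 2, by omega⟩
  have hk2 : k + 2 - 2 = k := by omega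
  rw [hk2]
  rcases lt_or_ge k 3 with hk | hk
  · have hk1 : 1 ≤ k := by omega
    interval_cases k
    · norm_num [tailCount_three, tailCount_one, properClosedCount_one]
    · norm_num [tailCount_four, tailCount_two, properClosedCount_two]
  · have key : ∀ y : V, ((∑ x : V, tailCountFrom G (k+2) x y : ℕ) : ℤ)
        = (((G.neighborSet y).ncard : ℤ) - 2) * properClosedCount G k y
          + tailCount G k y := by
      intro y
      rw [sum_tailCountFrom G (by omega : 0 < k + 2) y]
      exact big_step G hk y
    calc (∑ x : V, (tailCount G (k+2) x : ℤ))
        = ∑ x : V, ∑ y : V, (tailCountFrom G (k+2) x y : ℤ) := by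
          refine Finset.sum_congr rfl fun x _ => ?_
          rw [tailCount_eq_sum G (by omega : 0 < k + 2) x]
          push_cast
          rfl
      _ = ∑ y : V, ∑ x : V, (tailCountFrom G (k+2) x y : ℤ) := Finset.sum_comm
      _ = ∑ y : V, ((((G.neighborSet y).ncard : ℤ) - 2) * properClosedCount G k y
            + tailCount G k y) := by
          refine Finset.sum_congr rfl fun y _ => ?_
          rw [← key y]
          push_cast
          rfl
      _ = (∑ x : V, (tailCount G k x : ℤ))
            + ∑ y : V, (((G.neighborSet y).ncard : ℤ) - 2) * properClosedCount G k y := by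
          rw [Finset.sum_add_distrib]
          ring
end

section
/- Let G and G' be locally finite graphs, x a vertex of G, y a vertex of G', and let j ≥ 1 and r ∈ ℕ satisfy 2r ≥ j + 2. If the rooted balls B_r^G(x) and B_r^{G'}(y) are isomorphic as rooted graphs, then N_j^G(x) = N_j^{G'}(y): the numbers of reduced closed paths of length j starting at x in G and starting at y in G' coincide. -/
/-- For an `n`-periodic closed path, being reduced (proper/backtrack-free and
without a tail) is equivalent to `c (i + 2) ≠ c i` for all `i`. -/
def IsReducedCP {V : Type*} (c : ℕ → V) : Prop := ∀ i, c (i + 2) ≠ c i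

/-- A closed path of length `n` is primitive if it is not obtained by going
`m ≥ 2` times around a shorter closed path. -/
def IsPrimitiveCP {V : Type*} (n : ℕ) (c : ℕ → V) : Prop :=
  ¬ ∃ d, d ∣ n ∧ d < n ∧ ∀ i, c (i + d) = c i

/-- `Ncount G j x`: the number of reduced closed paths of length `j` in `G`
starting at `x`. -/
noncomputable def Ncount {V : Type*} (G : SimpleGraph V) (j : ℕ) (x : V) : ℕ :=
  Nat.card {c : ℕ → V // IsClosedPath G j c ∧ IsReducedCP c ∧ c 0 = x}

/-- `Pcount G j x`: the number of primitive reduced closed paths of length `j`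
in `G` starting at `x`. -/
noncomputable def Pcount {V : Type*} (G : SimpleGraph V) (j : ℕ) (x : V) : ℕ :=
  Nat.card {c : ℕ → V // IsClosedPath G j c ∧ IsReducedCP c ∧ IsPrimitiveCP j c ∧ c 0 = x}

/-- The combinatorial ball of radius `r` around `x`: all vertices of the
connected component of `x` at combinatorial distance at most `r` from `x`. -/
def ballSet {V : Type*} (G : SimpleGraph V) (x : V) (r : ℕ) : Set V :=
  {z | G.Reachable x z ∧ G.dist x z ≤ r}

lemma self_mem_ballSet {V : Type*} (G : SimpleGraph V) (x : V) (r : ℕ) :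
    x ∈ ballSet G x r :=
  ⟨SimpleGraph.Reachable.refl x, by simp [SimpleGraph.dist_self]⟩

/-- A walk of length `b - a` along a chain of adjacent vertices. -/
lemma chain_walk {V : Type*} {G : SimpleGraph V} {c : ℕ → V}
    (hadj : ∀ i, G.Adj (c i) (c (i + 1))) (a b : ℕ) (hab : a ≤ b) :
    ∃ p : G.Walk (c a) (c b), p.length = b - a := by
  induction b, hab using Nat.le_induction with
  | base => exact ⟨SimpleGraph.Walk.nil, by simp⟩
  | succ n hn ih =>
    obtain ⟨p, hp⟩ := ih
    exact ⟨p.concat (hadj n), by simp [SimpleGraph.Walk.length_concat, hp]; omega⟩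

lemma periodic_mod_s14 {V : Type*} {c : ℕ → V} {j : ℕ} (hj : 1 ≤ j)
    (h : ∀ i, c (i + j) = c i) (i : ℕ) : c i = c (i % j) := by
  have key : ∀ q i, c (i + q * j) = c i := by
    intro q
    induction q with
    | zero => simp
    | succ q ih =>
      intro i
      have : i + (q + 1) * j = (i + q * j) + j := by ring
      rw [this, h, ih]
  conv_lhs => rw [← Nat.mod_add_div' i j]
  exact key _ _

/-- Every vertex of a closed path of length `j ≤ 2r` starting at `x` lies in the
`r`-ball around `x`. -/
lemma closedPath_mem_ballSet {V : Type*} {G : SimpleGraph V} {c : ℕ → V} {j r : ℕ}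
    (hj : 1 ≤ j) (hjr : j ≤ 2 * r) (hc : IsClosedPath G j c) (i : ℕ) :
    c i ∈ ballSet G (c 0) r := by
  obtain ⟨hper, hadj⟩ := hc
  have hmod := periodic_mod_s14 hj hper i
  set k := i % j with hk
  have hkj : k ≤ j := le_of_lt (Nat.mod_lt _ hj)
  obtain ⟨p, hp⟩ := chain_walk hadj 0 k (Nat.zero_le _)
  obtain ⟨q, hq⟩ := chain_walk hadj k j hkj
  have hcj : c j = c 0 := by simpa using hper 0
  have hreach : G.Reachable (c 0) (c k) := ⟨p⟩
  have h1 : G.dist (c 0) (c k) ≤ k := by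
    simpa [hp] using SimpleGraph.dist_le p
  have h2 : G.dist (c 0) (c k) ≤ j - k := by
    rw [SimpleGraph.dist_comm]
    have := SimpleGraph.dist_le (q.copy rfl hcj)
    simpa [hq] using this
  have hdist : G.dist (c 0) (c k) ≤ r := by omega
  rw [hmod]
  exact ⟨hreach, hdist⟩

/-- Transfer of reduced closed paths along a ball isomorphism. -/
lemma transfer_cp {V V' : Type*} {G : SimpleGraph V} {G' : SimpleGraph V'}
    {x : V} {y : V'} {j r : ℕ} (hj : 1 ≤ j) (hr : j + 2 ≤ 2 * r)
    (φ : ballSet G x r ≃ ballSet G' y r)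
    (hy : (φ ⟨x, self_mem_ballSet G x r⟩ : V') = y)
    (hadj : ∀ a b : ballSet G x r, G'.Adj (φ a) (φ b) ↔ G.Adj a b) :
    ∃ F : {c : ℕ → V // IsClosedPath G j c ∧ IsReducedCP c ∧ c 0 = x} →
          {c' : ℕ → V' // IsClosedPath G' j c' ∧ IsReducedCP c' ∧ c' 0 = y},
      ∀ (c : {c : ℕ → V // IsClosedPath G j c ∧ IsReducedCP c ∧ c 0 = x})
        (h : ∀ i, (c : ℕ → V) i ∈ ballSet G x r) (i : ℕ),
        ((F c : ℕ → V') i) = (φ ⟨(c : ℕ → V) i, h i⟩ : V') := by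
  have hjr : j ≤ 2 * r := by omega
  refine ⟨fun c => ?_, ?_⟩
  · obtain ⟨c, hcp, hred, hc0⟩ := c
    have hmem : ∀ i, c i ∈ ballSet G x r := fun i =>
      hc0 ▸ closedPath_mem_ballSet hj hjr hcp i
    refine ⟨fun i => (φ ⟨c i, hmem i⟩ : V'), ⟨?_, ?_⟩, ?_, ?_⟩
    · intro i
      have h2 : (⟨c (i + j), hmem (i + j)⟩ : ballSet G x r) = ⟨c i, hmem i⟩ :=
        Subtype.ext (hcp.1 i)
      show (φ ⟨c (i + j), hmem (i + j)⟩ : V') = (φ ⟨c i, hmem i⟩ : V')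
      rw [h2]
    · intro i
      exact (hadj _ _).mpr (hcp.2 i)
    · intro i h
      have h1 : (φ ⟨c (i + 2), hmem (i + 2)⟩ : V') = (φ ⟨c i, hmem i⟩ : V') := h
      have h2 : (φ ⟨c (i + 2), hmem (i + 2)⟩) = φ ⟨c i, hmem i⟩ := Subtype.ext h1
      exact hred i (congrArg Subtype.val (φ.injective h2))
    · show (φ ⟨c 0, hmem 0⟩ : V') = y
      have h2 : (⟨c 0, hmem 0⟩ : ballSet G x r) = ⟨x, self_mem_ballSet G x r⟩ :=
        Subtype.ext hc0
      rw [h2, hy]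
  · rintro ⟨c, hcp, hred, hc0⟩ h i
    exact congrArg (fun a => (φ a : V')) (Subtype.ext rfl)

/-- If `2r ≥ j + 2` and the rooted `r`-balls `B_r^G(x)` and
`B_r^{G'}(y)` are isomorphic as rooted graphs, then the numbers of reduced
closed paths of length `j` starting at `x` in `G` and at `y` in `G'` agree. -/
theorem Ncount_eq_of_ball_iso {V V' : Type*} (G : SimpleGraph V) (G' : SimpleGraph V')
    (hfin : G.LocallyFinite) (hfin' : G'.LocallyFinite)
    (x : V) (y : V') (j r : ℕ) (hj : 1 ≤ j) (hr : j + 2 ≤ 2 * r)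
    (hiso : ∃ φ : ballSet G x r ≃ ballSet G' y r,
      (φ ⟨x, self_mem_ballSet G x r⟩ : V') = y ∧
      ∀ a b : ballSet G x r, G'.Adj (φ a) (φ b) ↔ G.Adj a b) :
    Ncount G j x = Ncount G' j y := by
  obtain ⟨φ, hy, hadj⟩ := hiso
  have hjr : j ≤ 2 * r := by omega
  -- symmetric data
  have hy' : (φ.symm ⟨y, self_mem_ballSet G' y r⟩ : V) = x := by
    have : φ ⟨x, self_mem_ballSet G x r⟩ = ⟨y, self_mem_ballSet G' y r⟩ :=
      Subtype.ext hy
    rw [← this, φ.symm_apply_apply]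
  have hadj' : ∀ a b : ballSet G' y r, G.Adj (φ.symm a) (φ.symm b) ↔ G'.Adj a b := by
    intro a b
    rw [← hadj (φ.symm a) (φ.symm b), φ.apply_symm_apply, φ.apply_symm_apply]
  obtain ⟨F, hF⟩ := transfer_cp hj hr φ hy hadj
  obtain ⟨F', hF'⟩ := transfer_cp hj hr φ.symm hy' hadj'
  have left : ∀ c, F' (F c) = c := by
    rintro ⟨c, hcp, hred, hc0⟩
    set cc : {c : ℕ → V // IsClosedPath G j c ∧ IsReducedCP c ∧ c 0 = x} :=
      ⟨c, hcp, hred, hc0⟩ with hcc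
    have hmem : ∀ i, c i ∈ ballSet G x r := fun i =>
      hc0 ▸ closedPath_mem_ballSet hj hjr hcp i
    have hmem' : ∀ i, ((F cc : ℕ → V') i) ∈ ballSet G' y r := fun i => by
      have := closedPath_mem_ballSet hj hjr (F cc).2.1 i
      rwa [(F cc).2.2.2] at this
    apply Subtype.ext
    funext i
    have e1 := hF cc hmem i
    have e2 := hF' (F cc) hmem' i
    rw [e2]
    have : (⟨(F cc : ℕ → V') i, hmem' i⟩ : ballSet G' y r) = φ ⟨c i, hmem i⟩ :=
      Subtype.ext e1
    rw [this, φ.symm_apply_apply]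
  have right : ∀ c', F (F' c') = c' := by
    rintro ⟨c, hcp, hred, hc0⟩
    set cc : {c : ℕ → V' // IsClosedPath G' j c ∧ IsReducedCP c ∧ c 0 = y} :=
      ⟨c, hcp, hred, hc0⟩ with hcc
    have hmem : ∀ i, c i ∈ ballSet G' y r := fun i =>
      hc0 ▸ closedPath_mem_ballSet hj hjr hcp i
    have hmem' : ∀ i, ((F' cc : ℕ → V) i) ∈ ballSet G x r := fun i => by
      have := closedPath_mem_ballSet hj hjr (F' cc).2.1 i
      rwa [(F' cc).2.2.2] at this
    apply Subtype.ext
    funext i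
    have e1 := hF' cc hmem i
    have e2 := hF (F' cc) hmem' i
    rw [e2]
    have : (⟨(F' cc : ℕ → V) i, hmem' i⟩ : ballSet G x r) = φ.symm ⟨c i, hmem i⟩ :=
      Subtype.ext e1
    rw [this, φ.apply_symm_apply]
  exact Nat.card_congr ⟨F, F', left, right⟩
end

section
/- Let D ≥ 2 and let (G_n) be a weakly convergent sequence of finite connected graphs with all vertex degrees ≤ D and |V(G_n)| → ∞. Then: (a) for every j ≥ 1 the normalized coefficients N̄_j(G_n) := (1/|V(G_n)|)·Σ_{x ∈ V(G_n)} N_j(x) converge to a limit N̄_j as n → ∞; and (b) the normalized Zeta functions Z_n(u) := exp(Σ_{j≥1} (N̄_j(G_n)/j) u^j) converge to Z(u) := exp(Σ_{j≥1} (N̄_j/j) u^j) uniformly on every compact subset of the open disc {u ∈ ℂ : |u| < (D−1)^{−1}}. -/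
open Filter

/-- `BallIso G x r H h`: the rooted `r`-ball `B_r^G(x)` is isomorphic, as a
rooted graph, to the rooted graph `(H, h)`. -/
def BallIso {V W : Type*} (G : SimpleGraph V) (x : V) (r : ℕ)
    (H : SimpleGraph W) (h : W) : Prop :=
  ∃ φ : ballSet G x r ≃ W,
    φ ⟨x, self_mem_ballSet G x r⟩ = h ∧
    ∀ a b : ballSet G x r, H.Adj (φ a) (φ b) ↔ G.Adj a b

/-- The averaged number of reduced closed paths of length `j` per vertex of a
finite graph (the coefficient of the normalized Zeta function). -/
noncomputable def avgN {V : Type*} (G : SimpleGraph V) (j : ℕ) : ℝ :=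
  (∑ᶠ x : V, (Ncount G j x : ℝ)) / Nat.card V

/-!
A closed path of length `j` at `x` never leaves the ball `B_j(x)`, so `N_j(x)` depends only on
the isomorphism type of that rooted ball. With degrees `≤ D` such balls have at most `(D+1)^j`
vertices and hence finitely many types, so `N̄_j(G_n)` is a fixed linear combination of type
frequencies, which converge by weak convergence.

A reduced closed path is determined by its first step and by `j - 1` later choices among at most
`D - 1` continuations, so `N̄_j ≤ D (D-1)^(j-1)`. This geometric bound dominates the logarithms of
the Zeta functions on compact subsets of the disc of radius `(D-1)⁻¹`, and dominated convergence,
uniformly in `u`, carries the coefficientwise convergence to the series and to their exponentials.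
-/

open Topology SimpleGraph

section Locality

variable {V W : Type*} {G : SimpleGraph V} {H : SimpleGraph W}

theorem SimpleGraph.exists_walk_length_of_adj_succ {c : ℕ → V}
    (hc : ∀ i, G.Adj (c i) (c (i + 1))) (k : ℕ) : ∃ w : G.Walk (c 0) (c k), w.length = k := by
  induction k with
  | zero => exact ⟨.nil, rfl⟩
  | succ k ih =>
    obtain ⟨w, hw⟩ := ih
    exact ⟨w.concat (hc k), by simp [hw]⟩

theorem IsClosedPath.mem_ballSet {n : ℕ} {c : ℕ → V} (hc : IsClosedPath G n c) (hn : 0 < n)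
    (i : ℕ) : c i ∈ ballSet G (c 0) n := by
  rw [← Function.Periodic.map_mod_nat hc.1 i]
  obtain ⟨w, hw⟩ := exists_walk_length_of_adj_succ hc.2 (i % n)
  exact ⟨w.reachable, (G.dist_le w).trans (hw.le.trans (Nat.mod_lt i hn).le)⟩

theorem Ncount_eq_of_embedding (φ : H ↪g G) {j : ℕ} {h : W}
    (hrange : ∀ c, IsClosedPath G j c → c 0 = φ h → ∀ i, c i ∈ Set.range φ) :
    Ncount H j h = Ncount G j (φ h) := by
  refine Nat.card_eq_of_bijective
    (fun p => ⟨φ ∘ p.1, ⟨fun i => congrArg φ (p.2.1.1 i), fun i => φ.map_adj_iff.mpr (p.2.1.2 i)⟩,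
      fun i => φ.injective.ne (p.2.2.1 i), congrArg φ p.2.2.2⟩) ⟨?_, ?_⟩
  · intro p p' hpp'
    exact Subtype.ext (funext fun i => φ.injective (congrFun (congrArg Subtype.val hpp') i))
  · rintro ⟨c, ⟨hper, hadj⟩, hred, h0⟩
    choose c' hc' using hrange c ⟨hper, hadj⟩ h0
    refine ⟨⟨c', ⟨fun i => φ.injective ?_, fun i => φ.map_adj_iff.mp ?_⟩, fun i => ?_, ?_⟩,
      Subtype.ext (funext hc')⟩
    · rw [hc', hc', hper]
    · rw [hc', hc']; exact hadj i
    · exact fun e => hred i (by rw [← hc', ← hc', e])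
    · exact φ.injective (by rw [hc', h0])

theorem ballIso_iff {x : V} {r : ℕ} {h : W} :
    BallIso G x r H h ↔
      ∃ φ : G.induce (ballSet G x r) ≃g H, φ ⟨x, self_mem_ballSet G x r⟩ = h :=
  ⟨fun ⟨φ, h0, hadj⟩ => ⟨⟨φ, hadj _ _⟩, h0⟩,
    fun ⟨φ, h0⟩ => ⟨φ.toEquiv, h0, fun _ _ => φ.map_adj_iff⟩⟩

theorem Ncount_eq_of_ballIso {x : V} {j : ℕ} {h : W} (hj : 0 < j) (hB : BallIso G x j H h) :
    Ncount G j x = Ncount H j h := by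
  obtain ⟨φ, rfl⟩ := ballIso_iff.mp hB
  calc Ncount G j x = Ncount (G.induce (ballSet G x j)) j ⟨x, self_mem_ballSet G x j⟩ :=
        (Ncount_eq_of_embedding (Embedding.induce (ballSet G x j))
          (h := ⟨x, self_mem_ballSet G x j⟩) fun c hc h0 i =>
          ⟨⟨c i, by simpa [h0] using hc.mem_ballSet hj i⟩, rfl⟩).symm
    _ = _ := Ncount_eq_of_embedding φ.toEmbedding fun c _ _ i => φ.surjective (c i)

end Locality

section Counting

theorem exists_injOn_fin {α β : Type*} [Finite β] {k : ℕ} [NeZero k] (s : α → Set β)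
    (hs : ∀ a, (s a).ncard ≤ k) : ∃ f : α → β → Fin k, ∀ a, (s a).InjOn (f a) := by
  have h : ∀ a, ∃ f : β → Fin k, (s a).InjOn f := fun a => by
    have hle : (s a).encard ≤ (Set.univ : Set (Fin k)).encard := by
      rw [← (s a).toFinite.cast_ncard_eq, Set.encard_univ, ENat.card_eq_coe_fintype_card,
        Fintype.card_fin]
      exact_mod_cast hs a
    obtain ⟨f, -, hf⟩ := (s a).toFinite.exists_injOn_of_encard_le hle
    exact ⟨f, hf⟩
  choose f hf using h
  exact ⟨f, hf⟩

variable {V : Type*} [Finite V] {G : SimpleGraph V} {D : ℕ}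

theorem card_ballSet_le (hdeg : ∀ v, (G.neighborSet v).ncard ≤ D) (x : V) (r : ℕ) :
    Nat.card (ballSet G x r) ≤ (D + 1) ^ r := by
  obtain ⟨f, hf⟩ := exists_injOn_fin (k := D + 1) (fun v => insert v (G.neighborSet v))
    fun v => (Set.ncard_insert_le _ _).trans (Nat.succ_le_succ (hdeg v))
  have hwalk : ∀ z : ballSet G x r, ∃ p : ℕ → V, p 0 = x ∧ p r = z ∧
      ∀ i, p (i + 1) ∈ insert (p i) (G.neighborSet (p i)) := by
    rintro ⟨z, hreach, hdist⟩
    obtain ⟨w, hw⟩ := hreach.exists_walk_length_eq_dist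
    refine ⟨w.getVert, w.getVert_zero, w.getVert_of_length_le (by omega), fun i => ?_⟩
    by_cases hi : i < w.length
    · exact Set.mem_insert_of_mem _ (w.adj_getVert_succ hi)
    · rw [w.getVert_of_length_le (by omega), w.getVert_of_length_le (by omega)]
      exact Set.mem_insert _ _
  choose p hp0 hpr hstep using hwalk
  have hinj : Function.Injective fun z (i : Fin r) => f (p z i) (p z (i + 1)) := by
    intro z z' hzz'
    have hagree : ∀ k ≤ r, p z k = p z' k := by
      intro k
      induction k with
      | zero => simp [hp0]
      | succ k ih =>
        intro hk
        have hk' : f (p z k) (p z (k + 1)) = f (p z' k) (p z' (k + 1)) := congrFun hzz' ⟨k, hk⟩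
        have e := ih (Nat.le_of_succ_le hk)
        rw [e] at hk'
        exact hf _ (e ▸ hstep z k) (hstep z' k) hk'
    exact Subtype.ext (by rw [← hpr, ← hpr, hagree r le_rfl])
  simpa using Nat.card_le_card_of_injective _ hinj

theorem Ncount_le (hD : 2 ≤ D) (hdeg : ∀ v, (G.neighborSet v).ncard ≤ D) {j : ℕ} (hj : 0 < j)
    (x : V) : Ncount G j x ≤ D * (D - 1) ^ (j - 1) := by
  have : NeZero D := ⟨by omega⟩
  have : NeZero (D - 1) := ⟨by omega⟩
  obtain ⟨f, hf⟩ := exists_injOn_fin (k := D) G.neighborSet hdeg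
  -- after traversing the dart `d`, a reduced path has at most `D - 1` ways to continue
  obtain ⟨g, hg⟩ := exists_injOn_fin (k := D - 1)
    (fun d : G.Dart => G.neighborSet d.snd \ {d.fst}) fun d => Nat.le_sub_one_of_lt <|
      (Set.ncard_sdiff_singleton_lt_of_mem (d.adj.symm : d.fst ∈ G.neighborSet d.snd)).trans_le
        (hdeg d.snd)
  let code (p : {c : ℕ → V // IsClosedPath G j c ∧ IsReducedCP c ∧ c 0 = x}) :
      Fin D × (Fin (j - 1) → Fin (D - 1)) :=
    (f x (p.1 1), fun i => g ⟨(p.1 i, p.1 (i + 1)), p.2.1.2 i⟩ (p.1 (i + 2)))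
  have hinj : Function.Injective code := by
    rintro ⟨c, hc, hred, h0⟩ ⟨c', hc', hred', h0'⟩ hcc'
    simp only [code, Prod.mk.injEq, funext_iff] at hcc'
    have hadj := hc.2
    have hadj' := hc'.2
    have hagree : ∀ k < j, c k = c' k ∧ c (k + 1) = c' (k + 1) := by
      intro k
      induction k with
      | zero =>
        intro _
        refine ⟨h0.trans h0'.symm, hf x ?_ ?_ hcc'.1⟩
        · exact h0 ▸ hadj 0
        · exact h0' ▸ hadj' 0
      | succ k ih =>
        intro hk
        obtain ⟨e0, e1⟩ := ih (by omega)
        have hk' := hcc'.2 ⟨k, by omega⟩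
        have hdart : (⟨(c' k, c' (k + 1)), hadj' k⟩ : G.Dart) = ⟨(c k, c (k + 1)), hadj k⟩ :=
          SimpleGraph.Dart.ext _ _ (Prod.ext e0.symm e1.symm)
        rw [hdart] at hk'
        refine ⟨e1, hg _ ⟨hadj (k + 1), hred k⟩ (Set.mem_sdiff_singleton.mpr ⟨?_, ?_⟩) hk'⟩
        · show G.Adj (c (k + 1)) (c' (k + 2))
          rw [e1]; exact hadj' (k + 1)
        · show c' (k + 2) ≠ c k
          rw [e0]; exact hred' k
    refine Subtype.ext (funext fun i => ?_)
    show c i = c' i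
    rw [← Function.Periodic.map_mod_nat hc.1 i, ← Function.Periodic.map_mod_nat hc'.1 i]
    exact (hagree _ (Nat.mod_lt i hj)).1
  simpa [Ncount] using Nat.card_le_card_of_injective _ hinj

end Counting

theorem avgN_nonneg {V : Type*} (G : SimpleGraph V) (j : ℕ) : 0 ≤ avgN G j :=
  div_nonneg (finsum_nonneg fun _ => Nat.cast_nonneg _) (Nat.cast_nonneg _)

theorem avgN_le {V : Type*} [Finite V] {G : SimpleGraph V} {D j : ℕ} (hD : 2 ≤ D)
    (hdeg : ∀ v, (G.neighborSet v).ncard ≤ D) (hj : 0 < j) :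
    avgN G j ≤ D * ((D : ℝ) - 1) ^ (j - 1) := by
  have : Fintype V := Fintype.ofFinite V
  have hN : ∀ x, (Ncount G j x : ℝ) ≤ D * ((D : ℝ) - 1) ^ (j - 1) := fun x => by
    calc (Ncount G j x : ℝ) ≤ ((D * (D - 1) ^ (j - 1) : ℕ) : ℝ) := by
          exact_mod_cast Ncount_le hD hdeg hj x
      _ = _ := by push_cast [Nat.cast_sub (by omega : 1 ≤ D)]; ring
  rw [avgN, finsum_eq_sum_of_fintype, Nat.card_eq_fintype_card]
  have hD' : (1 : ℝ) ≤ D := by exact_mod_cast (by omega : 1 ≤ D)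
  refine div_le_of_le_mul₀ (Nat.cast_nonneg _)
    (mul_nonneg (Nat.cast_nonneg _) (pow_nonneg (sub_nonneg.mpr hD') _)) ?_
  calc ∑ x, (Ncount G j x : ℝ) ≤ ∑ _x : V, D * ((D : ℝ) - 1) ^ (j - 1) :=
        Finset.sum_le_sum fun x _ => hN x
    _ = _ := by rw [Finset.sum_const, Finset.card_univ, nsmul_eq_mul, mul_comm]

section RootedTypes

/-- Rooted graphs with vertex set `Fin m`, `m ≤ B`: up to isomorphism, every rooted graph with
at most `B` vertices appears among them. -/
abbrev SmallRootedGraph (B : ℕ) : Type := Σ m : Fin (B + 1), SimpleGraph (Fin m) × Fin m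

def SmallRootedGraph.isoSetoid (B : ℕ) : Setoid (SmallRootedGraph B) where
  r t t' := ∃ ψ : t.2.1 ≃g t'.2.1, ψ t.2.2 = t'.2.2
  iseqv :=
    { refl := fun _ => ⟨.refl, rfl⟩
      symm := fun ⟨ψ, hψ⟩ => ⟨ψ.symm, by rw [← hψ]; exact ψ.symm_apply_apply _⟩
      trans := fun ⟨ψ, hψ⟩ ⟨ψ', hψ'⟩ => ⟨ψ.trans ψ', by simp [hψ, hψ']⟩ }

variable {V : Type*} {G : SimpleGraph V}

theorem exists_ballIso_smallRootedGraph [Finite V] {D : ℕ}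
    (hdeg : ∀ v, (G.neighborSet v).ncard ≤ D) (x : V) (r : ℕ) : ∃ t : SmallRootedGraph ((D + 1) ^ r), BallIso G x r t.2.1 t.2.2 := by
  let e := Finite.equivFin (ballSet G x r)
  refine ⟨⟨⟨_, Nat.lt_succ_of_le (card_ballSet_le hdeg x r)⟩, _, e ⟨x, self_mem_ballSet G x r⟩⟩,
    ballIso_iff.mpr ⟨SimpleGraph.Iso.map e _, rfl⟩⟩

theorem BallIso.ballIso_iff_isoSetoid {x : V} {r B : ℕ} {t t' : SmallRootedGraph B}
    (ht : BallIso G x r t.2.1 t.2.2) :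
    BallIso G x r t'.2.1 t'.2.2 ↔ SmallRootedGraph.isoSetoid B t t' := by
  obtain ⟨φ, hφ⟩ := ballIso_iff.mp ht
  rw [ballIso_iff]
  constructor
  · rintro ⟨φ', hφ'⟩
    exact ⟨φ.symm.trans φ', by rw [← hφ, ← hφ']; exact congrArg φ' (φ.symm_apply_apply _)⟩
  · rintro ⟨ψ, hψ⟩
    exact ⟨φ.trans ψ, by rw [← hψ, ← hφ]; rfl⟩

end RootedTypes

theorem tendsto_finsum_div_card_of_tendsto_frequency {V : ℕ → Type*} [∀ n, Finite (V n)]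
    {T : Type*} [Fintype T] (τ : ∀ n, V n → T) (g : T → ℝ) {L : T → ℝ}
    (hL : ∀ t, Tendsto (fun n => (Nat.card {x // τ n x = t} : ℝ) / Nat.card (V n)) atTop
      (𝓝 (L t))) :
    Tendsto (fun n => (∑ᶠ x, g (τ n x)) / Nat.card (V n)) atTop (𝓝 (∑ t, g t * L t)) := by
  classical
  have hsplit : ∀ n, (∑ᶠ x, g (τ n x)) / Nat.card (V n) =
      ∑ t, g t * ((Nat.card {x // τ n x = t} : ℝ) / Nat.card (V n)) := fun n => by
    have : Fintype (V n) := Fintype.ofFinite _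
    rw [finsum_eq_sum_of_fintype, ← Fintype.sum_fiberwise' (τ n) g, Finset.sum_div]
    refine Finset.sum_congr rfl fun t _ => ?_
    rw [Finset.sum_const, Finset.card_univ, nsmul_eq_mul]
    simp only [Nat.card_eq_fintype_card]
    ring
  simp only [hsplit]
  exact tendsto_finsetSum _ fun t _ => (hL t).const_mul (g t)

theorem exists_tendsto_avgN {D : ℕ} {V : ℕ → Type} [∀ n, Finite (V n)]
    {G : ∀ n, SimpleGraph (V n)} (hdeg : ∀ n (x : V n), ((G n).neighborSet x).ncard ≤ D)
    (hweak : ∀ (r : ℕ) (W : Type) (_ : Finite W) (H : SimpleGraph W) (h : W),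
      ∃ L : ℝ, Tendsto
        (fun n => (Nat.card {x : V n // BallIso (G n) x r H h} : ℝ) / Nat.card (V n))
        atTop (nhds L))
    {j : ℕ} (hj : 0 < j) : ∃ L, Tendsto (fun n => avgN (G n) j) atTop (𝓝 L) := by
  let S := SmallRootedGraph.isoSetoid ((D + 1) ^ j)
  have : Fintype (Quotient S) := Fintype.ofFinite _
  choose t ht using fun n x => exists_ballIso_smallRootedGraph (hdeg n) x j
  let τ n (x : V n) : Quotient S := ⟦t n x⟧
  have hfibre : ∀ n q, {x // τ n x = q} ≃ {x // BallIso (G n) x j q.out.2.1 q.out.2.2} :=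
    fun n q => Equiv.subtypeEquivRight fun x => by
      rw [(ht n x).ballIso_iff_isoSetoid]
      exact Quotient.mk_eq_iff_out
  choose L hL using fun q : Quotient S => hweak j _ inferInstance q.out.2.1 q.out.2.2
  refine ⟨_, (tendsto_finsum_div_card_of_tendsto_frequency τ (L := L)
    (fun q => (Ncount q.out.2.1 j q.out.2.2 : ℝ)) fun q => ?_).congr fun n => ?_⟩
  · simpa only [Nat.card_congr (hfibre _ q)] using hL q
  · rw [avgN]
    congr 1
    exact finsum_congr fun x => congrArg _ <| (Ncount_eq_of_ballIso hj <|
      (ht n x).ballIso_iff_isoSetoid.mpr (Quotient.mk_eq_iff_out.mp rfl)).symm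

theorem tendstoUniformlyOn_iff_tendsto_sub {ι α E : Type*} [NormedAddCommGroup E]
    {F : ι → α → E} {f : α → E} {p : Filter ι} {s : Set α} :
    TendstoUniformlyOn F f p s ↔
      Tendsto (fun q : ι × α => F q.1 q.2 - f q.2) (p ×ˢ 𝓟 s) (𝓝 0) := by
  rw [tendstoUniformlyOn_iff_tendsto, uniformity_eq_comap_nhds_zero, tendsto_comap_iff]
  rfl

theorem TendstoUniformlyOn.tsum_of_dominated {ι α β E : Type*} [NormedAddCommGroup E]
    [CompleteSpace E] {p : Filter ι} {K : Set α} {f : ι → β → α → E} {g : β → α → E}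
    {bound : β → ℝ} (h_sum : Summable bound)
    (hfg : ∀ k, TendstoUniformlyOn (fun n => f n k) (g k) p K)
    (hf : ∀ n k, ∀ x ∈ K, ‖f n k x‖ ≤ bound k) (hg : ∀ k, ∀ x ∈ K, ‖g k x‖ ≤ bound k) :
    TendstoUniformlyOn (fun n x => ∑' k, f n k x) (fun x => ∑' k, g k x) p K := by
  simp only [tendstoUniformlyOn_iff_tendsto_sub] at hfg ⊢
  have hK : ∀ᶠ q : ι × α in p ×ˢ 𝓟 K, q.2 ∈ K := tendsto_snd (tendsto_principal.mp le_rfl)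
  have h_tannery := tendsto_tsum_of_dominated_convergence (h_sum.mul_left 2) hfg <| by
    filter_upwards [hK] with q hq k
    exact (norm_sub_le _ _).trans (by linarith [hf q.1 k q.2 hq, hg k q.2 hq])
  rw [tsum_zero] at h_tannery
  refine h_tannery.congr' ?_
  filter_upwards [hK] with q hq
  exact (h_sum.of_norm_bounded (hf q.1 · q.2 hq)).tsum_sub (h_sum.of_norm_bounded (hg · q.2 hq))

theorem norm_div_succ_mul_pow_le (c : ℝ) (j : ℕ) (u : ℂ) :
    ‖((c : ℂ) / ((j : ℂ) + 1)) * u ^ (j + 1)‖ ≤ |c| * ‖u‖ ^ (j + 1) := by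
  rw [norm_mul, norm_div, norm_pow, Complex.norm_real, Real.norm_eq_abs]
  gcongr
  exact div_le_self (abs_nonneg c) (by norm_cast; simp)

theorem tendstoUniformlyOn_cexp_tsum {a : ℕ → ℕ → ℝ} {b : ℕ → ℝ} {C R : ℝ}
    (ha : ∀ n j, |a n j| ≤ C * R ^ j) (hab : ∀ j, Tendsto (a · j) atTop (𝓝 (b j)))
    {K : Set ℂ} (hK : K ⊆ Metric.ball 0 R⁻¹) (hKc : IsCompact K) :
    TendstoUniformlyOn
      (fun n u => Complex.exp (∑' j : ℕ, ((a n j : ℂ) / ((j : ℂ) + 1)) * u ^ (j + 1)))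
      (fun u => Complex.exp (∑' j : ℕ, ((b j : ℂ) / ((j : ℂ) + 1)) * u ^ (j + 1)))
      atTop K := by
  obtain ⟨ρ, hρR, hKρ⟩ := exists_lt_subset_ball hKc.isClosed hK
  have hu : ∀ u ∈ K, ‖u‖ ≤ ρ := fun u hu => by simpa using (Metric.mem_ball.mp (hKρ hu)).le
  rcases K.eq_empty_or_nonempty with rfl | ⟨u₀, hu₀⟩
  · exact tendstoUniformlyOn_empty
  have hρ : 0 ≤ ρ := (norm_nonneg u₀).trans (hu u₀ hu₀)
  have hR : 0 < R := inv_pos.mp (hρ.trans_lt hρR)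
  have hRρ : R * ρ < 1 := by
    calc R * ρ < R * R⁻¹ := by gcongr
      _ = 1 := mul_inv_cancel₀ hR.ne'
  have h_sum : Summable fun j : ℕ => C * ρ * (R * ρ) ^ j :=
    (summable_geometric_of_lt_one (by positivity) hRρ).mul_left _
  have hterm : ∀ (j : ℕ) (c : ℝ), |c| ≤ C * R ^ j → ∀ u ∈ K,
      ‖((c : ℂ) / ((j : ℂ) + 1)) * u ^ (j + 1)‖ ≤ C * ρ * (R * ρ) ^ j := fun j c hc u hu' =>
    calc _ ≤ |c| * ‖u‖ ^ (j + 1) := norm_div_succ_mul_pow_le c j u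
      _ ≤ C * R ^ j * ρ ^ (j + 1) := by
        gcongr
        · exact (abs_nonneg c).trans hc
        · exact hu u hu'
      _ = C * ρ * (R * ρ) ^ j := by ring
  have hb : ∀ j, |b j| ≤ C * R ^ j := fun j => le_of_tendsto' (hab j).abs (ha · j)
  have h_term : ∀ j, TendstoUniformlyOn (fun n u => ((a n j : ℂ) / ((j : ℂ) + 1)) * u ^ (j + 1))
      (fun u => ((b j : ℂ) / ((j : ℂ) + 1)) * u ^ (j + 1)) atTop K := by
    intro j
    rw [tendstoUniformlyOn_iff_tendsto_sub]
    have hK' : ∀ᶠ q : ℕ × ℂ in atTop ×ˢ 𝓟 K, q.2 ∈ K :=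
      tendsto_snd (tendsto_principal.mp le_rfl)
    have h_coeff : Tendsto (fun q : ℕ × ℂ => |a q.1 j - b j| * ρ ^ (j + 1)) (atTop ×ˢ 𝓟 K)
        (𝓝 0) := by
      simpa using (((hab j).sub_const (b j)).abs.comp tendsto_fst).mul_const (ρ ^ (j + 1))
    refine squeeze_zero_norm' ?_ h_coeff
    filter_upwards [hK'] with q hq
    calc _ = ‖(((a q.1 j - b j : ℝ) : ℂ) / ((j : ℂ) + 1)) * q.2 ^ (j + 1)‖ := by
          push_cast; ring_nf
      _ ≤ |a q.1 j - b j| * ‖q.2‖ ^ (j + 1) := norm_div_succ_mul_pow_le _ j _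
      _ ≤ _ := by gcongr; exact hu _ hq
  refine (TendstoUniformlyOn.tsum_of_dominated h_sum h_term (fun n j => hterm j _ (ha n j))
    (fun j => hterm j _ (hb j))).comp_cexp ⟨∑' j, C * ρ * (R * ρ) ^ j, ?_⟩
  rintro _ ⟨u, hu', rfl⟩
  exact (Complex.re_le_norm _).trans
    (tsum_of_norm_bounded h_sum.hasSum fun j => hterm j _ (hb j) u hu')

theorem weakly_convergent_zeta_convergence_general
    (D : ℕ) (hD : 2 ≤ D)
    (V : ℕ → Type) (hVfin : ∀ n, Finite (V n))
    (G : ∀ n, SimpleGraph (V n))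
    (hdeg : ∀ n (x : V n), ((G n).neighborSet x).ncard ≤ D)
    (hweak : ∀ (r : ℕ) (W : Type) (_ : Finite W) (H : SimpleGraph W) (h : W),
      ∃ L : ℝ, Tendsto
        (fun n => (Nat.card {x : V n // BallIso (G n) x r H h} : ℝ) / Nat.card (V n))
        atTop (nhds L)) :
    ∃ Nbar : ℕ → ℝ,
      (∀ j, 1 ≤ j → Tendsto (fun n => avgN (G n) j) atTop (nhds (Nbar j))) ∧
      ∀ K : Set ℂ, K ⊆ Metric.ball 0 ((D : ℝ) - 1)⁻¹ → IsCompact K →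
        TendstoUniformlyOn
          (fun n u => Complex.exp
            (∑' j : ℕ, ((avgN (G n) (j + 1) : ℂ) / ((j : ℂ) + 1)) * u ^ (j + 1)))
          (fun u => Complex.exp
            (∑' j : ℕ, ((Nbar (j + 1) : ℂ) / ((j : ℂ) + 1)) * u ^ (j + 1)))
          atTop K := by
  have := hVfin
  choose! Nbar hNbar using fun j (hj : 1 ≤ j) => exists_tendsto_avgN hdeg hweak hj
  have hbound : ∀ n j, |avgN (G n) (j + 1)| ≤ D * ((D : ℝ) - 1) ^ j := fun n j => by
    rw [abs_of_nonneg (avgN_nonneg _ _)]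
    simpa using avgN_le hD (hdeg n) j.succ_pos
  exact ⟨Nbar, hNbar, fun K hK hKc =>
    tendstoUniformlyOn_cexp_tsum hbound (fun j => hNbar (j + 1) j.succ_pos) hK hKc⟩

/-- If `(G_n)` is a weakly convergent sequence of finite
connected graphs with degrees `≤ D` and `|V(G_n)| → ∞`, then the normalized
coefficients `N̄_j(G_n)` converge to some limit `N̄_j` for every `j ≥ 1`, and the
normalized Zeta functions converge to `exp(∑_{j≥1} (N̄_j/j) u^j)` uniformly on
every compact subset of the disc `{|u| < (D−1)⁻¹}`. -/
theorem weakly_convergent_zeta_convergence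
    (D : ℕ) (hD : 2 ≤ D)
    (V : ℕ → Type) (hVfin : ∀ n, Finite (V n))
    (G : ∀ n, SimpleGraph (V n))
    (hconn : ∀ n, (G n).Connected)
    (hdeg : ∀ n (x : V n), ((G n).neighborSet x).ncard ≤ D)
    (hcard : Tendsto (fun n => Nat.card (V n)) atTop atTop)
    (hweak : ∀ (r : ℕ) (W : Type) (_ : Finite W) (H : SimpleGraph W) (h : W),
      ∃ L : ℝ, Tendsto
        (fun n => (Nat.card {x : V n // BallIso (G n) x r H h} : ℝ) / Nat.card (V n))
        atTop (nhds L)) :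
    ∃ Nbar : ℕ → ℝ,
      (∀ j, 1 ≤ j → Tendsto (fun n => avgN (G n) j) atTop (nhds (Nbar j))) ∧
      ∀ K : Set ℂ, K ⊆ Metric.ball 0 ((D : ℝ) - 1)⁻¹ → IsCompact K →
        TendstoUniformlyOn
          (fun n u => Complex.exp
            (∑' j : ℕ, ((avgN (G n) (j + 1) : ℂ) / ((j : ℂ) + 1)) * u ^ (j + 1)))
          (fun u => Complex.exp
            (∑' j : ℕ, ((Nbar (j + 1) : ℂ) / ((j : ℂ) + 1)) * u ^ (j + 1)))
          atTop K :=
  weakly_convergent_zeta_convergence_general D hD V hVfin G hdeg hweak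
end
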